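/- arXiv:math/0305082 — 4 statements merged into one kernel-verified Lean document; each statement's English description precedes it below -/
import Mathlib

section
/- In the space X: let (y_i) be a normalized block basis of (e_i) which has a spreading model (ỹ_i), and suppose N ∈ ℕ satisfies 0.99 ≤ ‖(1/(2N))(ỹ_1 + ⋯ + ỹ_{2N})‖. Then there exist k ∈ ℕ and a subsequence (x_i) of (y_i) such that for all j_1 < j_2 < ... < j_N one has 0.96 < Σ_{i=1}^{k} 3^{-i} ‖[k,∞)((1/N) Σ_{s=1}^{N} x_{j_s})‖_i. -/
/-!
Fix `N` anchor blocks `y_n, …, y_{n+N-1}` so far out that, by the spreading model, every average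
of `2N` increasing blocks from `n` on has norm above `0.98`, and let `k` lie just past the
anchors. Let `a` be the average of the anchors and `u` that of `N` later blocks. Disjointness of
the blocks gives `‖(a + u)/2‖_∞ ≤ 1/2`, so `(a + u)/2` is normed, up to `0.98`, by an admissible
sum `∑_{i ≤ l} 3^{-i} ∑_j ‖E^i_j ·‖` with `l ≤ E^i_j`. If `l ≥ k` this sum does not see `a` and is
at most `‖u/2‖ ≤ 1/2`; hence `l < k`, and splitting the sum between `a` (worth at most
`‖a‖ ≤ 1`) and `u` leaves `∑_{i ≤ k} 3^{-i} ‖u‖_i > 2 · 0.98 - 1 = 0.96`.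
-/

open scoped BigOperators ENNReal NNReal
open Filter

noncomputable section

/-- Restriction of a finitely supported vector to a set of coordinates. -/
def restrF (S : Set ℕ) (x : ℕ →₀ ℝ) : ℕ →₀ ℝ :=
  haveI := Classical.decPred (· ∈ S)
  x.filter (· ∈ S)

/-- The sup norm `‖x‖_∞` of a finitely supported vector. -/
def supF (x : ℕ →₀ ℝ) : ℝ := ⨆ i, |x i|

/-- The norm `‖x‖_i = sup_{E_1 < ⋯ < E_{n_i}} ∑_j ν(E_j x)`. -/
def normI (ν : (ℕ →₀ ℝ) → ℝ) (nseq : ℕ → ℕ) (i : ℕ) (x : ℕ →₀ ℝ) : ℝ :=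
  sSup {r | ∃ E : ℕ → Finset ℕ,
    (∀ j, j < nseq i → (E j).Nonempty) ∧
    (∀ j j', j < j' → j' < nseq i → ∀ e ∈ E j, ∀ e' ∈ E j', e < e') ∧
    r = ∑ j ∈ Finset.range (nseq i), ν (restrF (E j) x)}

/-- The set of admissible sums `∑_{i=1}^k 3^{-i} ∑_{j=1}^{n_i} ν(E^i_j x)` appearing in the
implicit equation defining the norm of `X`, where `k ≤ E^i_1 < E^i_2 < ⋯ < E^i_{n_i}`. -/
def normSetA (ν : (ℕ →₀ ℝ) → ℝ) (nseq : ℕ → ℕ) (x : ℕ →₀ ℝ) : Set ℝ :=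
  {r | ∃ k : ℕ, 0 < k ∧ ∃ E : ℕ → ℕ → Finset ℕ,
    (∀ i, 1 ≤ i → i ≤ k → ∀ j, j < nseq i → (E i j).Nonempty) ∧
    (∀ i, 1 ≤ i → i ≤ k → ∀ j, j < nseq i → ∀ e ∈ E i j, k ≤ e) ∧
    (∀ i, 1 ≤ i → i ≤ k → ∀ j j', j < j' → j' < nseq i →
      ∀ e ∈ E i j, ∀ e' ∈ E i j', e < e') ∧
    r = ∑ i ∈ Finset.Icc 1 k, ((1 : ℝ) / 3) ^ i *
          ∑ j ∈ Finset.range (nseq i), ν (restrF (E i j) x)}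

/-- `ν` is a norm on `c₀₀`. -/
def IsNormC00 (ν : (ℕ →₀ ℝ) → ℝ) : Prop :=
  (∀ x, 0 ≤ ν x) ∧ (∀ x, ν x = 0 → x = 0) ∧
  (∀ (a : ℝ) (x), ν (a • x) = |a| * ν x) ∧ (∀ x y, ν (x + y) ≤ ν x + ν y)

/-- The defining hypotheses on the sequence `(n_i)` and the norm `ν` of the space `X`
of Section 2: `(n_i)` is increasing, and
`(n_1+⋯+n_k)^{-1/p} ∑_{i≤k} n_i/3^i → ∞` for every `p > 1`; `ν` satisfies the
implicit Tsirelson-type equation. -/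
def IsSectionTwoSpace (nseq : ℕ → ℕ) (ν : (ℕ →₀ ℝ) → ℝ) : Prop :=
  StrictMono nseq ∧ (∀ i, 0 < nseq i) ∧
  (∀ p : ℝ, 1 < p →
    Tendsto (fun k => (∑ i ∈ Finset.Icc 1 k, (nseq i : ℝ)) ^ (-(1 / p)) *
      ∑ i ∈ Finset.Icc 1 k, (nseq i : ℝ) / 3 ^ i) atTop atTop) ∧
  IsNormC00 ν ∧
  (∀ x, ν x = max (supF x) (sSup (normSetA ν nseq x)))

/-- `y` is a block basis of the unit vector basis of `c₀₀`. -/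
def IsBlockSeqF (y : ℕ → (ℕ →₀ ℝ)) : Prop :=
  (∀ i, y i ≠ 0) ∧ ∀ i, ∀ a ∈ (y i).support, ∀ b ∈ (y (i + 1)).support, a < b

/-- `xt` (a basic sequence in the Banach space `Y`) is a spreading model of the
sequence `x` of `c₀₀` endowed with the norm `ν`. -/
def IsSpreadingModelNu {Y : Type*} [NormedAddCommGroup Y] [NormedSpace ℝ Y]
    (ν : (ℕ →₀ ℝ) → ℝ) (x : ℕ → (ℕ →₀ ℝ)) (xt : ℕ → Y) : Prop :=
  ((∀ i, xt i ≠ 0) ∧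
    ∃ K : ℝ, 1 ≤ K ∧ ∀ (a : ℕ → ℝ) (m n : ℕ), m ≤ n →
      ‖∑ i ∈ Finset.range m, a i • xt i‖ ≤ K * ‖∑ i ∈ Finset.range n, a i • xt i‖) ∧
  ∃ ε : ℕ → ℝ, (∀ n, 0 < ε n) ∧ Antitone ε ∧ Tendsto ε atTop (nhds 0) ∧
    ∀ (n : ℕ) (a : Fin n → ℝ), (∀ i, |a i| ≤ 1) →
      ∀ k : Fin n → ℕ, StrictMono k → (∀ i, n ≤ k i) →
        |ν (∑ i, a i • x (k i)) - ‖∑ i, a i • xt (i : ℕ)‖| < ε n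

section Restriction

variable {S : Set ℕ} {x z : ℕ →₀ ℝ} {t : ℕ}

lemma restrF_apply_of_mem (h : t ∈ S) (x : ℕ →₀ ℝ) : restrF S x t = x t := by
  classical
  exact Finsupp.filter_apply_pos _ x h

lemma restrF_apply_of_notMem (h : t ∉ S) (x : ℕ →₀ ℝ) : restrF S x t = 0 := by
  classical
  exact Finsupp.filter_apply_neg _ x h

lemma restrF_add (S : Set ℕ) (x z : ℕ →₀ ℝ) : restrF S (x + z) = restrF S x + restrF S z := by
  classical
  exact Finsupp.filter_add

lemma restrF_smul (S : Set ℕ) (c : ℝ) (x : ℕ →₀ ℝ) : restrF S (c • x) = c • restrF S x := by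
  classical
  exact Finsupp.filter_smul

lemma mem_support_restrF : t ∈ (restrF S x).support ↔ t ∈ x.support ∧ t ∈ S := by
  classical
  rw [restrF, Finsupp.support_filter, Finset.mem_filter]

lemma restrF_congr (h : ∀ t ∈ S, x t = z t) : restrF S x = restrF S z := by
  ext t
  by_cases ht : t ∈ S
  · rw [restrF_apply_of_mem ht, restrF_apply_of_mem ht, h t ht]
  · rw [restrF_apply_of_notMem ht, restrF_apply_of_notMem ht]

lemma restrF_eq_self (h : ∀ t ∈ x.support, t ∈ S) : restrF S x = x := by
  ext t
  by_cases ht : t ∈ S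
  · exact restrF_apply_of_mem ht x
  · rw [restrF_apply_of_notMem ht, eq_comm, ← Finsupp.notMem_support_iff]
    exact fun hx => ht (h t hx)

end Restriction

lemma abs_le_supF (x : ℕ →₀ ℝ) (t : ℕ) : |x t| ≤ supF x := by
  refine le_ciSup (f := fun t => |x t|) ⟨∑ s ∈ x.support, |x s|, ?_⟩ t
  rintro _ ⟨t, rfl⟩
  dsimp only
  by_cases ht : t ∈ x.support
  · exact Finset.single_le_sum (fun s _ => abs_nonneg (x s)) ht
  · rw [Finsupp.notMem_support_iff.mp ht, abs_zero]
    exact Finset.sum_nonneg fun s _ => abs_nonneg (x s)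

lemma supF_le {x : ℕ →₀ ℝ} {c : ℝ} (h : ∀ t, |x t| ≤ c) : supF x ≤ c :=
  ciSup_le h

lemma abs_sum_apply_le_of_pairwiseDisjoint {ι : Type*} {s : Finset ι} {f : ι → ℕ →₀ ℝ}
    (hf : (s : Set ι).PairwiseDisjoint fun i => (f i).support) {c : ℝ} (hc : 0 ≤ c)
    (hfc : ∀ i ∈ s, ∀ t, |f i t| ≤ c) (t : ℕ) : |(∑ i ∈ s, f i) t| ≤ c := by
  rw [Finsupp.finsetSum_apply]
  by_cases hex : ∃ i ∈ s, t ∈ (f i).support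
  · obtain ⟨i, hi, hti⟩ := hex
    rw [Finset.sum_eq_single_of_mem i hi fun i' hi' hne =>
      Finsupp.notMem_support_iff.mp fun hti' =>
        Finset.disjoint_left.mp (hf hi' hi hne) hti' hti]
    exact hfc i hi t
  · rw [Finset.sum_eq_zero fun i hi => Finsupp.notMem_support_iff.mp fun hti => hex ⟨i, hi, hti⟩,
      abs_zero]
    exact hc

lemma exists_mem_support_of_mem_support_smul_sum {ι : Type*} {s : Finset ι}
    {f : ι → ℕ →₀ ℝ} {c : ℝ} {t : ℕ} (ht : t ∈ (c • ∑ i ∈ s, f i).support) :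
    ∃ i ∈ s, t ∈ (f i).support :=
  Finset.mem_biUnion.mp (Finsupp.support_finsetSum (Finsupp.support_smul ht))

def admissibleSum (ν : (ℕ →₀ ℝ) → ℝ) (nseq : ℕ → ℕ) (k : ℕ) (E : ℕ → ℕ → Finset ℕ)
    (x : ℕ →₀ ℝ) : ℝ :=
  ∑ i ∈ Finset.Icc 1 k, ((1 : ℝ) / 3) ^ i * ∑ j ∈ Finset.range (nseq i), ν (restrF (E i j) x)

lemma sum_Icc_one_third_pow_le_one (k : ℕ) : ∑ i ∈ Finset.Icc 1 k, ((1 : ℝ) / 3) ^ i ≤ 1 := by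
  rw [← Finset.Ico_add_one_right_eq_Icc]
  refine (geom_sum_Ico_le_of_lt_one (by norm_num) (by norm_num)).trans ?_
  norm_num

namespace IsNormC00

variable {ν : (ℕ →₀ ℝ) → ℝ} (hν : IsNormC00 ν)
include hν

lemma nonneg (x : ℕ →₀ ℝ) : 0 ≤ ν x := hν.1 x

lemma smul (a : ℝ) (x : ℕ →₀ ℝ) : ν (a • x) = |a| * ν x := hν.2.2.1 a x

lemma add_le (x z : ℕ →₀ ℝ) : ν (x + z) ≤ ν x + ν z := hν.2.2.2 x z

lemma map_zero : ν 0 = 0 := by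
  simpa using hν.smul 0 0

lemma sum_le {ι : Type*} (s : Finset ι) (f : ι → ℕ →₀ ℝ) :
    ν (∑ i ∈ s, f i) ≤ ∑ i ∈ s, ν (f i) :=
  Finset.le_sum_of_subadditive ν hν.map_zero.le hν.add_le s f

lemma smul_sum_le_one {N : ℕ} (f : Fin N → ℕ →₀ ℝ) (hf : ∀ i, ν (f i) ≤ 1) :
    ν ((N : ℝ)⁻¹ • ∑ i, f i) ≤ 1 := by
  rcases N.eq_zero_or_pos with rfl | hN
  · simp [hν.map_zero]
  rw [hν.smul, abs_inv, Nat.abs_cast, inv_mul_le_iff₀ (by positivity), mul_one]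
  calc ν (∑ i, f i) ≤ ∑ i, ν (f i) := hν.sum_le _ _
    _ ≤ ∑ _i : Fin N, (1 : ℝ) := Finset.sum_le_sum fun i _ => hf i
    _ = N := by simp

lemma le_sum_abs_mul {x : ℕ →₀ ℝ} {S : Finset ℕ} (hS : x.support ⊆ S) :
    ν x ≤ ∑ t ∈ S, |x t| * ν (Finsupp.single t 1) := by
  calc ν x = ν (∑ t ∈ S, x t • Finsupp.single t 1) := by
        congr 1
        conv_lhs => rw [← Finsupp.sum_single x]
        rw [Finsupp.sum_of_support_subset x hS _ (by simp)]
        simp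
    _ ≤ ∑ t ∈ S, |x t| * ν (Finsupp.single t 1) := by
        refine (hν.sum_le _ _).trans_eq ?_
        simp only [hν.smul]

lemma sum_restrF_le {n : ℕ} {E : ℕ → Finset ℕ}
    (hE : ∀ j j', j < j' → j' < n → ∀ e ∈ E j, ∀ e' ∈ E j', e < e') (x : ℕ →₀ ℝ) :
    ∑ j ∈ Finset.range n, ν (restrF (E j) x) ≤
      ∑ t ∈ x.support, |x t| * ν (Finsupp.single t 1) := by
  classical
  have hdisj : (↑(Finset.range n) : Set ℕ).PairwiseDisjoint fun j => E j ∩ x.support := by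
    intro j hj j' hj' hne
    refine Finset.disjoint_left.mpr fun e he he' => ?_
    simp only [Finset.coe_range, Set.mem_Iio] at hj hj'
    rcases hne.lt_or_gt with h | h
    · exact lt_irrefl e (hE j j' h hj' e (Finset.mem_inter.mp he).1 e (Finset.mem_inter.mp he').1)
    · exact lt_irrefl e (hE j' j h hj e (Finset.mem_inter.mp he').1 e (Finset.mem_inter.mp he).1)
  calc ∑ j ∈ Finset.range n, ν (restrF (E j) x)
      ≤ ∑ j ∈ Finset.range n, ∑ t ∈ E j ∩ x.support, |x t| * ν (Finsupp.single t 1) := by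
        refine Finset.sum_le_sum fun j _ => ?_
        refine (hν.le_sum_abs_mul (S := E j ∩ x.support) fun t ht => ?_).trans_eq ?_
        · obtain ⟨htx, htE⟩ := mem_support_restrF.mp ht
          exact Finset.mem_inter.mpr ⟨htE, htx⟩
        · refine Finset.sum_congr rfl fun t ht => ?_
          rw [restrF_apply_of_mem (Finset.mem_coe.mpr (Finset.mem_inter.mp ht).1)]
    _ = ∑ t ∈ (Finset.range n).biUnion (fun j => E j ∩ x.support),
          |x t| * ν (Finsupp.single t 1) := (Finset.sum_biUnion hdisj).symm
    _ ≤ ∑ t ∈ x.support, |x t| * ν (Finsupp.single t 1) :=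
        Finset.sum_le_sum_of_subset_of_nonneg
          (Finset.biUnion_subset.mpr fun j _ => Finset.inter_subset_right)
          fun t _ _ => mul_nonneg (abs_nonneg _) (hν.nonneg _)

lemma bddAbove_normI_set (nseq : ℕ → ℕ) (i : ℕ) (x : ℕ →₀ ℝ) :
    BddAbove {r | ∃ E : ℕ → Finset ℕ,
      (∀ j, j < nseq i → (E j).Nonempty) ∧
      (∀ j j', j < j' → j' < nseq i → ∀ e ∈ E j, ∀ e' ∈ E j', e < e') ∧
      r = ∑ j ∈ Finset.range (nseq i), ν (restrF (E j) x)} := by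
  refine ⟨∑ t ∈ x.support, |x t| * ν (Finsupp.single t 1), ?_⟩
  rintro r ⟨E, -, hE, rfl⟩
  exact hν.sum_restrF_le hE x

lemma sum_restrF_le_normI {nseq : ℕ → ℕ} {i : ℕ} {E : ℕ → Finset ℕ}
    (hne : ∀ j, j < nseq i → (E j).Nonempty)
    (hE : ∀ j j', j < j' → j' < nseq i → ∀ e ∈ E j, ∀ e' ∈ E j', e < e') (x : ℕ →₀ ℝ) :
    ∑ j ∈ Finset.range (nseq i), ν (restrF (E j) x) ≤ normI ν nseq i x :=
  le_csSup (hν.bddAbove_normI_set nseq i x) ⟨E, hne, hE, rfl⟩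

lemma normI_nonneg (nseq : ℕ → ℕ) (i : ℕ) (x : ℕ →₀ ℝ) : 0 ≤ normI ν nseq i x := by
  refine Real.sSup_nonneg ?_
  rintro r ⟨E, -, -, rfl⟩
  exact Finset.sum_nonneg fun j _ => hν.nonneg _

lemma bddAbove_normSetA (nseq : ℕ → ℕ) (x : ℕ →₀ ℝ) : BddAbove (normSetA ν nseq x) := by
  set C := ∑ t ∈ x.support, |x t| * ν (Finsupp.single t 1)
  have hC : 0 ≤ C := Finset.sum_nonneg fun t _ => mul_nonneg (abs_nonneg _) (hν.nonneg _)
  refine ⟨C, ?_⟩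
  rintro r ⟨k, -, E, -, -, hE, rfl⟩
  calc ∑ i ∈ Finset.Icc 1 k, ((1 : ℝ) / 3) ^ i * ∑ j ∈ Finset.range (nseq i), ν (restrF (E i j) x)
      ≤ ∑ i ∈ Finset.Icc 1 k, ((1 : ℝ) / 3) ^ i * C := by
        refine Finset.sum_le_sum fun i hi => ?_
        obtain ⟨hi1, hik⟩ := Finset.mem_Icc.mp hi
        exact mul_le_mul_of_nonneg_left (hν.sum_restrF_le (hE i hi1 hik) x) (by positivity)
    _ ≤ C := by
        rw [← Finset.sum_mul]
        exact mul_le_of_le_one_left hC (sum_Icc_one_third_pow_le_one k)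

variable {nseq : ℕ → ℕ} {k : ℕ} {E : ℕ → ℕ → Finset ℕ}

lemma admissibleSum_add_le (x z : ℕ →₀ ℝ) :
    admissibleSum ν nseq k E (x + z) ≤ admissibleSum ν nseq k E x + admissibleSum ν nseq k E z := by
  simp only [admissibleSum, ← Finset.sum_add_distrib, ← mul_add]
  refine Finset.sum_le_sum fun i _ => mul_le_mul_of_nonneg_left
    (Finset.sum_le_sum fun j _ => ?_) (by positivity)
  rw [restrF_add]
  exact hν.add_le _ _

lemma admissibleSum_smul (c : ℝ) (x : ℕ →₀ ℝ) :
    admissibleSum ν nseq k E (c • x) = |c| * admissibleSum ν nseq k E x := by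
  simp only [admissibleSum, restrF_smul, hν.smul, Finset.mul_sum]
  exact Finset.sum_congr rfl fun i _ => Finset.sum_congr rfl fun j _ => by ring

lemma admissibleSum_le_sum_normI
    (hne : ∀ i, 1 ≤ i → i ≤ k → ∀ j, j < nseq i → (E i j).Nonempty)
    (hE : ∀ i, 1 ≤ i → i ≤ k → ∀ j j', j < j' → j' < nseq i →
      ∀ e ∈ E i j, ∀ e' ∈ E i j', e < e') (x : ℕ →₀ ℝ) :
    admissibleSum ν nseq k E x ≤ ∑ i ∈ Finset.Icc 1 k, ((1 : ℝ) / 3) ^ i * normI ν nseq i x := by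
  refine Finset.sum_le_sum fun i hi => ?_
  obtain ⟨hi1, hik⟩ := Finset.mem_Icc.mp hi
  exact mul_le_mul_of_nonneg_left (hν.sum_restrF_le_normI (hne i hi1 hik) (hE i hi1 hik) x)
    (by positivity)

end IsNormC00

lemma admissibleSum_congr {ν : (ℕ →₀ ℝ) → ℝ} {nseq : ℕ → ℕ} {k : ℕ} {E : ℕ → ℕ → Finset ℕ}
    (hE : ∀ i, 1 ≤ i → i ≤ k → ∀ j, j < nseq i → ∀ e ∈ E i j, k ≤ e) {x z : ℕ →₀ ℝ}
    (hxz : ∀ t, k ≤ t → x t = z t) : admissibleSum ν nseq k E x = admissibleSum ν nseq k E z := by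
  refine Finset.sum_congr rfl fun i hi => ?_
  obtain ⟨hi1, hik⟩ := Finset.mem_Icc.mp hi
  refine congrArg _ (Finset.sum_congr rfl fun j hj => ?_)
  rw [restrF_congr fun t ht => hxz t (hE i hi1 hik j (Finset.mem_range.mp hj) t ht)]

namespace IsSectionTwoSpace

variable {nseq : ℕ → ℕ} {ν : (ℕ →₀ ℝ) → ℝ} (hX : IsSectionTwoSpace nseq ν)
include hX

lemma isNormC00 : IsNormC00 ν := hX.2.2.2.1

lemma supF_le_nu (x : ℕ →₀ ℝ) : supF x ≤ ν x :=
  (le_max_left _ _).trans (hX.2.2.2.2 x).ge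

lemma le_nu_of_mem_normSetA {x : ℕ →₀ ℝ} {r : ℝ} (hr : r ∈ normSetA ν nseq x) : r ≤ ν x :=
  (le_csSup (hX.isNormC00.bddAbove_normSetA nseq x) hr).trans
    ((le_max_right _ _).trans (hX.2.2.2.2 x).ge)

lemma exists_mem_normSetA_gt {x : ℕ →₀ ℝ} {θ : ℝ} (hsup : supF x ≤ θ) (hθ : θ < ν x) :
    ∃ r ∈ normSetA ν nseq x, θ < r := by
  have hθA : θ < sSup (normSetA ν nseq x) := by
    rw [hX.2.2.2.2 x] at hθ
    exact (lt_max_iff.mp hθ).resolve_left hsup.not_gt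
  refine exists_lt_of_lt_csSup ?_ hθA
  by_contra hempty
  rw [Set.not_nonempty_iff_eq_empty.mp hempty, Real.sSup_empty] at hθA
  linarith [abs_nonneg (x 0), abs_le_supF x 0]

theorem sub_nu_lt_sum_normI {a u : ℕ →₀ ℝ} {k : ℕ} {θ : ℝ} (ha : ∀ t ∈ a.support, t < k)
    (hsup : supF ((2 : ℝ)⁻¹ • (a + u)) ≤ θ) (hu : ν ((2 : ℝ)⁻¹ • u) ≤ θ)
    (hθ : θ < ν ((2 : ℝ)⁻¹ • (a + u))) :
    2 * θ - ν a < ∑ i ∈ Finset.Icc 1 k, ((1 : ℝ) / 3) ^ i * normI ν nseq i u := by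
  have hν := hX.isNormC00
  obtain ⟨r, ⟨kz, hkz, E, hne, hge, hE, hr⟩, hθr⟩ := hX.exists_mem_normSetA_gt hsup hθ
  change r = admissibleSum ν nseq kz E _ at hr
  have hlevel : kz < k := by
    by_contra! hk
    have hagree : ∀ t, kz ≤ t → ((2 : ℝ)⁻¹ • (a + u)) t = ((2 : ℝ)⁻¹ • u) t := fun t ht => by
      have hat : a t = 0 := Finsupp.notMem_support_iff.mp fun h => (ha t h).not_ge (hk.trans ht)
      simp [hat]
    have hmem : r ∈ normSetA ν nseq ((2 : ℝ)⁻¹ • u) :=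
      ⟨kz, hkz, E, hne, hge, hE, hr.trans (admissibleSum_congr hge hagree)⟩
    linarith [hX.le_nu_of_mem_normSetA hmem]
  have hsplit : r ≤ 2⁻¹ * admissibleSum ν nseq kz E a + 2⁻¹ * admissibleSum ν nseq kz E u := by
    rw [hr, hν.admissibleSum_smul, abs_of_pos (by norm_num), ← mul_add]
    exact mul_le_mul_of_nonneg_left (hν.admissibleSum_add_le a u) (by norm_num)
  have ha_le : admissibleSum ν nseq kz E a ≤ ν a :=
    hX.le_nu_of_mem_normSetA ⟨kz, hkz, E, hne, hge, hE, rfl⟩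
  have hu_le : admissibleSum ν nseq kz E u ≤
      ∑ i ∈ Finset.Icc 1 k, ((1 : ℝ) / 3) ^ i * normI ν nseq i u :=
    (hν.admissibleSum_le_sum_normI hne hE u).trans <|
      Finset.sum_le_sum_of_subset_of_nonneg (Finset.Icc_subset_Icc_right hlevel.le)
        fun i _ _ => mul_nonneg (by positivity) (hν.normI_nonneg nseq i u)
  linarith

end IsSectionTwoSpace

namespace IsBlockSeqF

variable {y : ℕ → ℕ →₀ ℝ} (hy : IsBlockSeqF y)
include hy

lemma support_nonempty (i : ℕ) : (y i).support.Nonempty :=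
  Finsupp.support_nonempty_iff.mpr (hy.1 i)

lemma lt_of_lt {i i' : ℕ} (h : i < i') {a b : ℕ} (ha : a ∈ (y i).support)
    (hb : b ∈ (y i').support) : a < b := by
  induction i' generalizing b with
  | zero => omega
  | succ i' ih =>
    rcases (Nat.lt_succ_iff.mp h).lt_or_eq with h' | rfl
    · obtain ⟨c, hc⟩ := hy.support_nonempty i'
      exact (ih h' hc).trans (hy.2 i' c hc b hb)
    · exact hy.2 i a ha b hb

lemma disjoint_support {i i' : ℕ} (h : i ≠ i') : Disjoint (y i).support (y i').support := by
  refine Finset.disjoint_left.mpr fun t hti hti' => ?_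
  rcases h.lt_or_gt with h | h
  · exact lt_irrefl t (hy.lt_of_lt h hti hti')
  · exact lt_irrefl t (hy.lt_of_lt h hti' hti)

lemma le_max' {i i' : ℕ} (h : i ≤ i') {a : ℕ} (ha : a ∈ (y i).support) :
    a ≤ (y i').support.max' (hy.support_nonempty i') := by
  rcases h.lt_or_eq with h | rfl
  · exact (hy.lt_of_lt h ha (Finset.max'_mem _ _)).le
  · exact Finset.le_max' _ a ha

lemma max'_lt {i i' : ℕ} (h : i < i') {b : ℕ} (hb : b ∈ (y i').support) :
    (y i).support.max' (hy.support_nonempty i) < b :=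
  hy.lt_of_lt h (Finset.max'_mem _ _) hb

lemma supF_smul_sum_le {ι : Type*} [Fintype ι] {idx : ι → ℕ} (hidx : Function.Injective idx)
    (hy1 : ∀ i t, |y i t| ≤ 1) (c : ℝ) : supF (c • ∑ i, y (idx i)) ≤ |c| := by
  refine supF_le fun t => ?_
  rw [Finsupp.smul_apply, smul_eq_mul, abs_mul]
  refine mul_le_of_le_one_right (abs_nonneg c) (abs_sum_apply_le_of_pairwiseDisjoint ?_ zero_le_one
    (fun i _ => hy1 (idx i)) t)
  exact fun i _ i' _ hne => hy.disjoint_support (hidx.ne hne)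

end IsBlockSeqF

lemma Fin.strictMono_append {α : Type*} [Preorder α] {m d : ℕ} {u : Fin m → α} {v : Fin d → α}
    (hu : StrictMono u) (hv : StrictMono v) (huv : ∀ i j, u i < v j) :
    StrictMono (Fin.append u v) := by
  intro p q hpq
  induction p using Fin.addCases with
  | left p =>
    induction q using Fin.addCases with
    | left q => simpa using hu ((Fin.strictMono_castAdd d).lt_iff_lt.mp hpq)
    | right q => simpa using huv p q
  | right p =>
    induction q using Fin.addCases with
    | left q =>
      rw [Fin.lt_def, Fin.val_natAdd, Fin.val_castAdd] at hpq
      omega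
    | right q => simpa using hv ((Fin.natAdd_lt_natAdd_iff m).mp hpq)

/-- Padding with zero coefficients turns a stretch of length `m` into one of any length `n ≥ m`,
so the error `ε n` can be made small for a fixed `m`. -/
lemma IsSpreadingModelNu.exists_abs_sub_lt {Y : Type*} [NormedAddCommGroup Y] [NormedSpace ℝ Y]
    {ν : (ℕ →₀ ℝ) → ℝ} {x : ℕ → ℕ →₀ ℝ} {xt : ℕ → Y} (hsm : IsSpreadingModelNu ν x xt)
    (m : ℕ) {δ : ℝ} (hδ : 0 < δ) :
    ∃ n, ∀ a : Fin m → ℝ, (∀ i, |a i| ≤ 1) → ∀ k : Fin m → ℕ, StrictMono k → (∀ i, n ≤ k i) →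
      |ν (∑ i, a i • x (k i)) - ‖∑ i, a i • xt (i : ℕ)‖| < δ := by
  obtain ⟨-, ε, -, -, hε0, hε⟩ := hsm
  obtain ⟨n, hmn, hεn⟩ := ((eventually_ge_atTop m).and (hε0.eventually (gt_mem_nhds hδ))).exists
  refine ⟨n, fun a ha k hk hkn => ?_⟩
  obtain ⟨d, rfl⟩ := Nat.exists_eq_add_of_le hmn
  set pad : Fin d → ℕ := fun i => m + d + ∑ l, k l + i
  have hpad : StrictMono (Fin.append k pad) := by
    refine Fin.strictMono_append hk (fun i j hij => by simpa [pad] using hij) fun i j => ?_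
    have := Finset.single_le_sum (fun l _ => Nat.zero_le (k l)) (Finset.mem_univ i)
    simp only [pad]
    omega
  have hpad_ge : ∀ i, m + d ≤ Fin.append k pad i := by
    intro i
    induction i using Fin.addCases with
    | left i => simpa using hkn i
    | right i => simp only [Fin.append_right, pad]; omega
  have hbound : ∀ i, |Fin.append a (0 : Fin d → ℝ) i| ≤ 1 := by
    intro i
    induction i using Fin.addCases with
    | left i => simpa using ha i
    | right i => simp
  have := hε (m + d) (Fin.append a (0 : Fin d → ℝ)) hbound _ hpad hpad_ge
  simp only [Fin.sum_univ_add, Fin.append_left, Fin.append_right, Pi.zero_apply, zero_smul,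
    Finset.sum_const_zero, add_zero, Fin.val_castAdd] at this
  exact this.trans hεn

lemma IsSpreadingModelNu.exists_lt_nu_smul_sum {Y : Type*} [NormedAddCommGroup Y]
    [NormedSpace ℝ Y] {ν : (ℕ →₀ ℝ) → ℝ} {x : ℕ → ℕ →₀ ℝ} {xt : ℕ → Y}
    (hsm : IsSpreadingModelNu ν x xt) {m : ℕ} {θ : ℝ}
    (hθ : θ < ‖(1 / (m : ℝ)) • ∑ i ∈ Finset.range m, xt i‖) :
    ∃ n, ∀ k : Fin m → ℕ, StrictMono k → (∀ i, n ≤ k i) →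
      θ < ν ((1 / (m : ℝ)) • ∑ i, x (k i)) := by
  obtain ⟨n, hn⟩ := hsm.exists_abs_sub_lt m (sub_pos.mpr hθ)
  refine ⟨n, fun k hk hkn => ?_⟩
  have hc : |1 / (m : ℝ)| ≤ 1 := by
    rw [abs_of_nonneg (by positivity), one_div]
    exact Nat.cast_inv_le_one m
  have := hn (fun _ => 1 / (m : ℝ)) (fun _ => hc) k hk hkn
  rw [← Finset.smul_sum, ← Finset.smul_sum, Fin.sum_univ_eq_sum_range (fun i => xt i)] at this
  linarith [(abs_lt.mp this).1]

theorem IsSectionTwoSpace.lt_sum_normI_of_anchors {nseq : ℕ → ℕ} {ν : (ℕ →₀ ℝ) → ℝ}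
    (hX : IsSectionTwoSpace nseq ν) {y : ℕ → ℕ →₀ ℝ} (hblock : IsBlockSeqF y)
    (hnorm : ∀ i, ν (y i) = 1) {N n : ℕ} (hN : 0 < N)
    (hn : ∀ k : Fin (N + N) → ℕ, StrictMono k → (∀ i, n ≤ k i) →
      (0.98 : ℝ) < ν ((1 / ((N + N : ℕ) : ℝ)) • ∑ i, y (k i)))
    {j : Fin N → ℕ} (hj : StrictMono j) :
    let k := (y (n + N - 1)).support.max' (hblock.support_nonempty _) + 1
    (0.96 : ℝ) < ∑ i ∈ Finset.Icc 1 k, ((1 : ℝ) / 3) ^ i *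
      normI ν nseq i (restrF (Set.Ici k) ((N : ℝ)⁻¹ • ∑ s : Fin N, y (n + N + j s))) := by
  intro k
  have hν := hX.isNormC00
  have hcoef : 1 / ((N + N : ℕ) : ℝ) = 2⁻¹ * (N : ℝ)⁻¹ := by push_cast; ring
  set a := (N : ℝ)⁻¹ • ∑ t : Fin N, y (n + t)
  set u := (N : ℝ)⁻¹ • ∑ s : Fin N, y (n + N + j s)
  have ha_lt : ∀ t ∈ a.support, t < k := fun t ht => by
    obtain ⟨s, -, hts⟩ := exists_mem_support_of_mem_support_smul_sum ht
    exact Nat.lt_succ_of_le (hblock.le_max' (by omega) hts)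
  have hu_restr : restrF (Set.Ici k) u = u := restrF_eq_self fun t ht => by
    obtain ⟨s, -, hts⟩ := exists_mem_support_of_mem_support_smul_sum ht
    exact hblock.max'_lt (by omega) hts
  set idx := Fin.append (fun t : Fin N => n + t) fun s => n + N + j s
  have hidx : StrictMono idx :=
    Fin.strictMono_append (fun t t' h => by simpa using h) (fun s s' h => by simpa using hj h)
      fun t s => by omega
  have hmid : (2 : ℝ)⁻¹ • (a + u) = (1 / ((N + N : ℕ) : ℝ)) • ∑ i, y (idx i) := by
    rw [Fin.sum_univ_add, hcoef, smul_add, smul_smul, smul_add, smul_smul]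
    simp only [idx, Fin.append_left, Fin.append_right]
  have hspread : (0.98 : ℝ) < ν ((2 : ℝ)⁻¹ • (a + u)) := hmid ▸ hn idx hidx fun i => by
    induction i using Fin.addCases with
    | left t => simp [idx]
    | right s => simp only [idx, Fin.append_right]; omega
  have hsup : supF ((2 : ℝ)⁻¹ • (a + u)) ≤ 0.98 := by
    rw [hmid]
    refine (hblock.supF_smul_sum_le hidx.injective (fun i t => ?_) _).trans ?_
    · exact (abs_le_supF _ t).trans ((hX.supF_le_nu _).trans (hnorm i).le)
    · have hN1 : (1 : ℝ) ≤ N := Nat.one_le_cast.mpr hN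
      rw [hcoef, abs_of_pos (by positivity)]
      linarith [inv_le_one_of_one_le₀ hN1]
  have hνa : ν a ≤ 1 := hν.smul_sum_le_one _ fun t => (hnorm _).le
  have hνu : ν ((2 : ℝ)⁻¹ • u) ≤ 0.98 := by
    have : ν u ≤ 1 := hν.smul_sum_le_one _ fun s => (hnorm _).le
    rw [hν.smul, abs_of_pos (by norm_num)]
    linarith
  have := hX.sub_nu_lt_sum_normI ha_lt hsup hνu hspread
  rw [hu_restr]
  linarith

/-- **Lemma 2.4.** In the space `X`: if `(y_i)` is a normalized block basis of `(e_i)`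
with spreading model `(ỹ_i)` and `N ∈ ℕ` satisfies
`0.99 ≤ ‖(1/(2N))(ỹ_1 + ⋯ + ỹ_{2N})‖`, then there are `k ∈ ℕ` and a subsequence
`(x_i) = (y_{φ(i)})` such that for all `j_1 < ⋯ < j_N`,
`0.96 < ∑_{i=1}^k 3^{-i} ‖[k,∞)((1/N) ∑_{s=1}^N x_{j_s})‖_i`. -/
theorem statement3 {Y : Type*} [NormedAddCommGroup Y] [NormedSpace ℝ Y]
    (nseq : ℕ → ℕ) (ν : (ℕ →₀ ℝ) → ℝ)
    (hX : IsSectionTwoSpace nseq ν)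
    (y : ℕ → ℕ →₀ ℝ) (hblock : IsBlockSeqF y) (hnorm : ∀ i, ν (y i) = 1)
    (yt : ℕ → Y) (hsm : IsSpreadingModelNu ν y yt)
    (N : ℕ) (hN : 0 < N)
    (h99 : (0.99 : ℝ) ≤ ‖(1 / (2 * (N : ℝ))) • ∑ i ∈ Finset.range (2 * N), yt i‖) :
    ∃ k : ℕ, 0 < k ∧ ∃ φ : ℕ → ℕ, StrictMono φ ∧
      ∀ j : Fin N → ℕ, StrictMono j →
        (0.96 : ℝ) < ∑ i ∈ Finset.Icc 1 k, ((1 : ℝ) / 3) ^ i *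
          normI ν nseq i (restrF (Set.Ici k) ((N : ℝ)⁻¹ • ∑ s : Fin N, y (φ (j s)))) := by
  obtain ⟨n, hn⟩ := hsm.exists_lt_nu_smul_sum (m := N + N) (θ := 0.98) <| by
    rw [Nat.cast_add, ← two_mul, ← two_mul]
    linarith
  exact ⟨_, Nat.succ_pos _, fun i => n + N + i, fun i i' h => Nat.add_lt_add_left h _,
    fun j hj => hX.lt_sum_normI_of_anchors hblock hnorm hN hn hj⟩

end
end

section
/- Let n, m ∈ ℕ, ε > 0, and let (x^{(1)}_i)_i, (x^{(2)}_i)_i, ..., (x^{(n)}_i)_i be normalized weakly null sequences in a Banach space X. Then there exists an infinite subset L of ℕ such that for all families of integers (k^{(j)}_i) and (ℓ^{(j)}_i) (i = 1,...,m, j = 1,...,n) in L satisfying k_1^{(1)} < k_1^{(2)} < ... < k_1^{(n)} < k_2^{(1)} < ... < k_2^{(n)} < ... < k_m^{(1)} < ... < k_m^{(n)} and ℓ_1^{(1)} < ℓ_1^{(2)} < ... < ℓ_1^{(n)} < ℓ_2^{(1)} < ... < ℓ_m^{(n)}, and all scalars (a^{(j)}_i)_{i=1,j=1}^{m,n} ⊆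 [-1,1], one has | ‖Σ_{i=1}^m Σ_{j=1}^n a^{(j)}_i x^{(j)}_{ℓ_i^{(j)}}‖ − ‖Σ_{i=1}^m Σ_{j=1}^n a^{(j)}_i x^{(j)}_{k_i^{(j)}}‖ | ≤ ε. -/
/-!
Colour each increasing `(m n)`-tuple of indices by the vector of norms of the mixed sums whose
coefficients run over a finite `η`-net `T` of the cube `[-1, 1]^{m × n}`. These vectors lie in a
bounded, hence totally bounded, subset of `ℝ^T`, so up to precision `ε / 3` there are finitely
many colours, and the infinite Ramsey theorem yields an infinite `L` on which any two interleaved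
families get the same colour. Since a mixed sum of norm-one vectors is `m n`-Lipschitz in its
coefficients, passing from the net to arbitrary coefficients costs at most `2 ε / 3`.
-/

open scoped BigOperators ENNReal NNReal
open Filter

noncomputable section

/-- `x` is a basic sequence: all terms are nonzero and there is a uniform bound on the
norms of the partial-sum projections. -/
def IsBasicSeq {X : Type*} [NormedAddCommGroup X] [NormedSpace ℝ X] (x : ℕ → X) : Prop :=
  (∀ i, x i ≠ 0) ∧
  ∃ K : ℝ, 1 ≤ K ∧ ∀ (a : ℕ → ℝ) (m n : ℕ), m ≤ n →
    ‖∑ i ∈ Finset.range m, a i • x i‖ ≤ K * ‖∑ i ∈ Finset.range n, a i • x i‖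

def IsNormalizedSeq {X : Type*} [NormedAddCommGroup X] (x : ℕ → X) : Prop := ∀ i, ‖x i‖ = 1

def IsSeminormalizedSeq {X : Type*} [NormedAddCommGroup X] (x : ℕ → X) : Prop :=
  ∃ c C : ℝ, 0 < c ∧ ∀ i, c ≤ ‖x i‖ ∧ ‖x i‖ ≤ C

def IsWeaklyNull {X : Type*} [NormedAddCommGroup X] [NormedSpace ℝ X] (x : ℕ → X) : Prop :=
  ∀ f : X →L[ℝ] ℝ, Tendsto (fun i => f (x i)) atTop (nhds 0)

/-- `x` `C`-dominates `y`. -/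
def DominatesWith {X Y : Type*} [NormedAddCommGroup X] [NormedSpace ℝ X]
    [NormedAddCommGroup Y] [NormedSpace ℝ Y] (C : ℝ) (x : ℕ → X) (y : ℕ → Y) : Prop :=
  ∀ (n : ℕ) (a : ℕ → ℝ),
    ‖∑ i ∈ Finset.range n, a i • y i‖ ≤ C * ‖∑ i ∈ Finset.range n, a i • x i‖

def Dominates {X Y : Type*} [NormedAddCommGroup X] [NormedSpace ℝ X]
    [NormedAddCommGroup Y] [NormedSpace ℝ Y] (x : ℕ → X) (y : ℕ → Y) : Prop :=
  ∃ C : ℝ, 1 ≤ C ∧ DominatesWith C x y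

def EquivSeqs {X Y : Type*} [NormedAddCommGroup X] [NormedSpace ℝ X]
    [NormedAddCommGroup Y] [NormedSpace ℝ Y] (x : ℕ → X) (y : ℕ → Y) : Prop :=
  Dominates x y ∧ Dominates y x

/-- `xt` (a sequence in `Y`) is a spreading model of the sequence `x` of `X`. -/
def IsSpreadingModelOf {X Y : Type*} [NormedAddCommGroup X] [NormedSpace ℝ X]
    [NormedAddCommGroup Y] [NormedSpace ℝ Y] (x : ℕ → X) (xt : ℕ → Y) : Prop :=
  IsBasicSeq xt ∧ ∃ ε : ℕ → ℝ, (∀ n, 0 < ε n) ∧ Antitone ε ∧ Tendsto ε atTop (nhds 0) ∧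
    ∀ (n : ℕ) (a : Fin n → ℝ), (∀ i, |a i| ≤ 1) →
      ∀ k : Fin n → ℕ, StrictMono k → (∀ i, n ≤ k i) →
        |‖∑ i, a i • x (k i)‖ - ‖∑ i, a i • xt (i : ℕ)‖| < ε n

/-- the `ℓ_p`-norm of a finite vector of reals (`p = ∞` giving the sup norm). -/
def lpNormFin (p : ℝ≥0∞) {n : ℕ} (a : Fin n → ℝ) : ℝ :=
  if p = ⊤ then ⨆ i, |a i| else (∑ i, |a i| ^ p.toReal) ^ (1 / p.toReal)

/-- `x` is equivalent to the unit vector basis of `ℓ_p` (of `c₀` if `p = ∞`). -/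
def EquivToLpBasis {Y : Type*} [NormedAddCommGroup Y] [NormedSpace ℝ Y]
    (p : ℝ≥0∞) (x : ℕ → Y) : Prop :=
  ∃ C : ℝ, 1 ≤ C ∧ ∀ (n : ℕ) (a : Fin n → ℝ),
    lpNormFin p a ≤ C * ‖∑ i, a i • x (i : ℕ)‖ ∧
    ‖∑ i, a i • x (i : ℕ)‖ ≤ C * lpNormFin p a

/-- `p` belongs to the Krivine set of the sequence `x`. -/
def InKrivineSet {Y : Type*} [NormedAddCommGroup Y] [NormedSpace ℝ Y]
    (p : ℝ≥0∞) (x : ℕ → Y) : Prop :=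
  ∀ ε : ℝ, 0 < ε → ∀ n : ℕ, ∃ m : ℕ, 0 < m ∧ ∃ lam : Fin m → ℝ, ∀ a : Fin n → ℝ,
    (1 + ε)⁻¹ * lpNormFin p a ≤
        ‖∑ i : Fin n, a i • ∑ k : Fin m, lam k • x ((i : ℕ) * m + (k : ℕ))‖ ∧
    ‖∑ i : Fin n, a i • ∑ k : Fin m, lam k • x ((i : ℕ) * m + (k : ℕ))‖ ≤ (1 + ε) * lpNormFin p a

/-- `y` is a block basis of `e`. -/
def IsBlockBasis {X : Type*} [NormedAddCommGroup X] [NormedSpace ℝ X]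
    (e y : ℕ → X) : Prop :=
  ∃ (q : ℕ → ℕ) (c : ℕ → ℝ), StrictMono q ∧ (∀ j, y j ≠ 0) ∧
    ∀ j, y j = ∑ i ∈ Finset.Ico (q j) (q (j + 1)), c i • e i

theorem exists_infinite_monochromatic_of_cons {C : Type*} [Finite C] {r : ℕ}
    (f : (Fin (r + 1) → ℕ) → C)
    (step : ∀ T : Set ℕ, T.Infinite → ∃ T' ⊆ T, T'.Infinite ∧ (∀ y ∈ T', sInf T < y) ∧
      ∃ c, ∀ t : Fin r → ℕ, StrictMono t → (∀ i, t i ∈ T') → f (Fin.cons (sInf T) t) = c)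
    {S : Set ℕ} (hS : S.Infinite) :
    ∃ L ⊆ S, L.Infinite ∧ ∃ c, ∀ t : Fin (r + 1) → ℕ, StrictMono t → (∀ i, t i ∈ L) →
      f t = c := by
  choose next next_subset next_infinite next_gt colour colour_spec using step
  let T : ℕ → {T : Set ℕ // T.Infinite} :=
    fun k => Nat.rec ⟨S, hS⟩ (fun _ T => ⟨next T.1 T.2, next_infinite T.1 T.2⟩) k
  let a : ℕ → ℕ := fun k => sInf (T k).1
  have a_mem : ∀ k, a k ∈ (T k).1 := fun k => Nat.sInf_mem (T k).2.nonempty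
  have T_anti : Antitone fun k => (T k).1 :=
    antitone_nat_of_succ_le fun k => next_subset (T k).1 (T k).2
  have a_mono : StrictMono a :=
    strictMono_nat_of_lt_succ fun k => next_gt _ _ _ (a_mem (k + 1))
  -- pigeonhole on the colour attached to each head `a k`
  obtain ⟨c, hc⟩ := Finite.exists_infinite_fiber fun k => colour (T k).1 (T k).2
  refine ⟨a '' _, ?_, (Set.infinite_coe_iff.mp hc).image a_mono.injective.injOn, c, ?_⟩
  · rintro _ ⟨k, -, rfl⟩
    exact T_anti (Nat.zero_le k) (a_mem k)
  · intro t ht htL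
    obtain ⟨k, hk, hk_head⟩ := htL 0
    have tail_mem : ∀ i, Fin.tail t i ∈ next (T k).1 (T k).2 := by
      intro i
      obtain ⟨k', -, hk'⟩ := htL i.succ
      have hkk' : k < k' := a_mono.lt_iff_lt.mp (hk_head ▸ hk' ▸ ht (Fin.succ_pos i))
      rw [Fin.tail, ← hk']
      exact T_anti (Nat.succ_le_of_lt hkk') (a_mem k')
    have := colour_spec _ _ (Fin.tail t) (ht.comp fun _ _ => Fin.succ_lt_succ_iff.mpr) tail_mem
    rw [← Fin.cons_self_tail t, ← hk_head, this]
    exact hk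

theorem Set.Infinite.exists_infinite_monochromatic {C : Type*} [Finite C] (r : ℕ)
    (f : (Fin r → ℕ) → C) {S : Set ℕ} (hS : S.Infinite) :
    ∃ L ⊆ S, L.Infinite ∧ ∃ c, ∀ t : Fin r → ℕ, StrictMono t → (∀ i, t i ∈ L) → f t = c := by
  induction r generalizing S with
  | zero => exact ⟨S, subset_rfl, hS, f Fin.elim0, fun t _ _ => congrArg f (Subsingleton.elim _ _)⟩
  | succ r ih =>
    refine exists_infinite_monochromatic_of_cons f (fun T hT => ?_) hS
    have hT' : (T ∩ Set.Ioi (sInf T)).Infinite := by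
      simpa [Set.sdiff_eq, Set.compl_Iic] using hT.sdiff (Set.finite_Iic (sInf T))
    obtain ⟨T', hT'sub, hT'inf, c, hc⟩ := ih (fun t => f (Fin.cons (sInf T) t)) hT'
    exact ⟨T', hT'sub.trans Set.inter_subset_left, hT'inf, fun y hy => (hT'sub hy).2, c, hc⟩

theorem TotallyBounded.exists_fin_coloring_dist_lt {α E : Type*} [PseudoMetricSpace E]
    {s : Set E} (hs : TotallyBounded s) {g : α → E} (hg : ∀ a, g a ∈ s) {δ : ℝ} (hδ : 0 < δ) :
    ∃ (N : ℕ) (c : α → Fin N), ∀ a b, c a = c b → dist (g a) (g b) < δ := by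
  obtain ⟨t, -, ht, hcover⟩ := Metric.finite_approx_of_totallyBounded hs (δ / 2) (half_pos hδ)
  have centre : ∀ a, ∃ y : t, dist (g a) y < δ / 2 := fun a => by
    obtain ⟨y, hy, hya⟩ := Set.mem_iUnion₂.mp (hcover (hg a))
    exact ⟨⟨y, hy⟩, hya⟩
  choose y hy using centre
  have : Finite t := ht
  refine ⟨_, fun a => Finite.equivFin t (y a), fun a b hab => ?_⟩
  have hya := hy a
  rw [(Finite.equivFin t).injective hab] at hya
  linarith [dist_triangle_right (g a) (g b) (y b), hy b]

theorem finProdFinEquiv_strictMono_lex {m n : ℕ} :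
    StrictMono fun x : Fin m ×ₗ Fin n => finProdFinEquiv (ofLex x) := by
  intro x y h
  simp only [Fin.lt_def, finProdFinEquiv_apply_val]
  rcases Prod.Lex.lt_iff.mp h with hi | ⟨hi, hj⟩
  · have : n * ((ofLex x).1 + 1) ≤ n * (ofLex y).1 := Nat.mul_le_mul_left n hi
    have := (ofLex x).2.isLt
    nlinarith
  · rw [hi]
    exact Nat.add_lt_add_right hj _

-- `k i j` stands for the index `k^{(j)}_i`.
def IsInterleaved {m n : ℕ} (k : Fin m → Fin n → ℕ) : Prop :=
  ∀ (i i' : Fin m) (j j' : Fin n), (i < i' ∨ (i = i' ∧ j < j')) → k i j < k i' j'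

theorem IsInterleaved.strictMono_comp_finProdFinEquiv_symm {m n : ℕ}
    {k : Fin m → Fin n → ℕ} (hk : IsInterleaved k) :
    StrictMono fun p => k (finProdFinEquiv.symm p).1 (finProdFinEquiv.symm p).2 := by
  intro p q hpq
  have hlex : toLex (finProdFinEquiv.symm p) < toLex (finProdFinEquiv.symm q) := by
    rwa [← finProdFinEquiv_strictMono_lex.lt_iff_lt, ofLex_toLex, ofLex_toLex,
      Equiv.apply_symm_apply, Equiv.apply_symm_apply]
  exact hk _ _ _ _ (Prod.Lex.lt_iff.mp hlex)

theorem exists_infinite_dist_lt_of_isInterleaved {m n : ℕ} {E : Type*} [PseudoMetricSpace E]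
    {s : Set E} (hs : TotallyBounded s) (g : (Fin m → Fin n → ℕ) → E) (hg : ∀ k, g k ∈ s)
    {δ : ℝ} (hδ : 0 < δ) :
    ∃ L : Set ℕ, L.Infinite ∧ ∀ k l, IsInterleaved k → IsInterleaved l →
      (∀ i j, k i j ∈ L) → (∀ i j, l i j ∈ L) → dist (g k) (g l) < δ := by
  obtain ⟨N, c, hc⟩ := hs.exists_fin_coloring_dist_lt hg hδ
  let unflatten : (Fin (m * n) → ℕ) → Fin m → Fin n → ℕ :=
    fun t i j => t (finProdFinEquiv (i, j))
  obtain ⟨L, -, hL, col, hcol⟩ :=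
    Set.infinite_univ.exists_infinite_monochromatic (m * n) (fun t => c (unflatten t))
  have colour_eq : ∀ k, IsInterleaved k → (∀ i j, k i j ∈ L) → c k = col := fun k hk hkL =>
    by simpa only [unflatten, Equiv.symm_apply_apply] using
      hcol _ hk.strictMono_comp_finProdFinEquiv_symm fun p => hkL _ _
  exact ⟨L, hL, fun k l hk hl hkL hlL =>
    hc _ _ ((colour_eq k hk hkL).trans (colour_eq l hl hlL).symm)⟩

section MixedSum

variable {X : Type*} [NormedAddCommGroup X] [NormedSpace ℝ X] {m n : ℕ}

def mixedSum (x : Fin n → ℕ → X) (w : Fin m → Fin n → ℕ) (a : Fin m → Fin n → ℝ) : X :=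
  ∑ i, ∑ j, a i j • x j (w i j)

theorem norm_mixedSum_le {x : Fin n → ℕ → X} (hx : ∀ j i, ‖x j i‖ ≤ 1)
    (w : Fin m → Fin n → ℕ) (a : Fin m → Fin n → ℝ) : ‖mixedSum x w a‖ ≤ m * n * ‖a‖ :=
  calc ‖mixedSum x w a‖ ≤ ∑ i, ∑ j, ‖a i j • x j (w i j)‖ :=
        (norm_sum_le _ _).trans (Finset.sum_le_sum fun i _ => norm_sum_le _ _)
    _ ≤ ∑ _i : Fin m, ∑ _j : Fin n, ‖a‖ := by
        gcongr with i _ j _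
        rw [norm_smul]
        exact mul_le_of_le_one_right (norm_nonneg _)
          (hx _ _) |>.trans ((norm_le_pi_norm (a i) j).trans (norm_le_pi_norm a i))
    _ = m * n * ‖a‖ := by simp [mul_assoc]

theorem abs_norm_mixedSum_sub_le {x : Fin n → ℕ → X} (hx : ∀ j i, ‖x j i‖ ≤ 1)
    (w : Fin m → Fin n → ℕ) (a b : Fin m → Fin n → ℝ) :
    |‖mixedSum x w a‖ - ‖mixedSum x w b‖| ≤ m * n * ‖a - b‖ := by
  refine (abs_norm_sub_norm_le _ _).trans ?_
  have : mixedSum x w a - mixedSum x w b = mixedSum x w (a - b) := by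
    simp only [mixedSum, ← Finset.sum_sub_distrib, Pi.sub_apply, sub_smul]
  rw [this]
  exact norm_mixedSum_le hx w (a - b)

theorem exists_infinite_abs_norm_mixedSum_sub_lt {x : Fin n → ℕ → X} (hx : ∀ j i, ‖x j i‖ ≤ 1)
    (T : Finset (Fin m → Fin n → ℝ)) {δ : ℝ} (hδ : 0 < δ) :
    ∃ L : Set ℕ, L.Infinite ∧ ∀ k l, IsInterleaved k → IsInterleaved l →
      (∀ i j, k i j ∈ L) → (∀ i j, l i j ∈ L) →
      ∀ s ∈ T, |‖mixedSum x k s‖ - ‖mixedSum x l s‖| < δ := by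
  have profile_mem : ∀ w, (fun s : T => ‖mixedSum x w s.1‖) ∈
      Metric.closedBall 0 (m * n * ∑ s ∈ T, ‖s‖) := by
    refine fun w => mem_closedBall_zero_iff.mpr <|
      (pi_norm_le_iff_of_nonneg (by positivity)).mpr fun s => ?_
    rw [norm_norm]
    exact (norm_mixedSum_le hx w s).trans <| mul_le_mul_of_nonneg_left
      (Finset.single_le_sum (f := (‖·‖)) (fun _ _ => norm_nonneg _) s.2) (by positivity)
  obtain ⟨L, hL, hL_close⟩ := exists_infinite_dist_lt_of_isInterleaved
    (isCompact_closedBall _ _).totallyBounded _ profile_mem hδ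
  refine ⟨L, hL, fun k l hk hl hkL hlL s hs => ?_⟩
  rw [← Real.dist_eq]
  exact (dist_le_pi_dist _ _ (⟨s, hs⟩ : T)).trans_lt (hL_close k l hk hl hkL hlL)

end MixedSum

theorem statement6_general {X : Type*} [NormedAddCommGroup X] [NormedSpace ℝ X]
    (n m : ℕ) (ε : ℝ) (hε : 0 < ε)
    (x : Fin n → ℕ → X) (hnorm : ∀ j, IsNormalizedSeq (x j)) :
    ∃ L : Set ℕ, L.Infinite ∧
      ∀ (k l : Fin m → Fin n → ℕ),
        (∀ i j, k i j ∈ L) → (∀ i j, l i j ∈ L) →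
        (∀ (i i' : Fin m) (j j' : Fin n),
          (i < i' ∨ (i = i' ∧ j < j')) → k i j < k i' j') →
        (∀ (i i' : Fin m) (j j' : Fin n),
          (i < i' ∨ (i = i' ∧ j < j')) → l i j < l i' j') →
        ∀ a : Fin m → Fin n → ℝ, (∀ i j, |a i j| ≤ 1) →
          |‖∑ i : Fin m, ∑ j : Fin n, a i j • x j (l i j)‖ -
            ‖∑ i : Fin m, ∑ j : Fin n, a i j • x j (k i j)‖| ≤ ε := by
  have hx : ∀ j i, ‖x j i‖ ≤ 1 := fun j i => (hnorm j i).le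
  obtain ⟨η, hη, hmnη⟩ := exists_pos_mul_lt (by positivity : 0 < ε / 3) (m * n : ℝ)
  obtain ⟨T, -, hT, hT_net⟩ :=
    finite_cover_balls_of_compact (isCompact_closedBall (0 : Fin m → Fin n → ℝ) 1) hη
  lift T to Finset (Fin m → Fin n → ℝ) using hT
  obtain ⟨L, hL, hL_close⟩ :=
    exists_infinite_abs_norm_mixedSum_sub_lt hx T (by positivity : 0 < ε / 3)
  refine ⟨L, hL, fun k l hkL hlL hk hl a ha => ?_⟩
  have ha_cube : a ∈ Metric.closedBall 0 1 := mem_closedBall_zero_iff.mpr <|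
    (pi_norm_le_iff_of_nonneg zero_le_one).mpr fun i =>
      (pi_norm_le_iff_of_nonneg zero_le_one).mpr fun j => ha i j
  obtain ⟨s, hsT, has⟩ := Set.mem_iUnion₂.mp (hT_net ha_cube)
  obtain ⟨hks, hks'⟩ := abs_le.mp (abs_norm_mixedSum_sub_le hx k a s)
  obtain ⟨hls, hls'⟩ := abs_le.mp (abs_norm_mixedSum_sub_le hx l a s)
  obtain ⟨hkl, hkl'⟩ := abs_lt.mp (hL_close k l hk hl hkL hlL s hsT)
  have hmn : m * n * ‖a - s‖ ≤ ε / 3 :=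
    (mul_le_mul_of_nonneg_left (mem_ball_iff_norm.mp has).le (by positivity)).trans hmnη.le
  change |‖mixedSum x l a‖ - ‖mixedSum x k a‖| ≤ ε
  exact abs_le.mpr ⟨by linarith, by linarith⟩

/-- **Lemma 3.4.** For normalized weakly null sequences `(x^{(1)}_i), …, (x^{(n)}_i)`
and `ε > 0` there is an infinite `L ⊆ ℕ` such that for all interleaved families
`(k^{(j)}_i)` and `(ℓ^{(j)}_i)` from `L` and scalars in `[-1,1]`, the two mixed sums
have norms within `ε` of each other. -/
theorem statement6 {X : Type*} [NormedAddCommGroup X] [NormedSpace ℝ X]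
    (n m : ℕ) (ε : ℝ) (hε : 0 < ε)
    (x : Fin n → ℕ → X) (hnorm : ∀ j, IsNormalizedSeq (x j))
    (hwn : ∀ j, IsWeaklyNull (x j)) :
    ∃ L : Set ℕ, L.Infinite ∧
      ∀ (k l : Fin m → Fin n → ℕ),
        (∀ i j, k i j ∈ L) → (∀ i j, l i j ∈ L) →
        (∀ (i i' : Fin m) (j j' : Fin n),
          (i < i' ∨ (i = i' ∧ j < j')) → k i j < k i' j') →
        (∀ (i i' : Fin m) (j j' : Fin n),
          (i < i' ∨ (i = i' ∧ j < j')) → l i j < l i' j') →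
        ∀ a : Fin m → Fin n → ℝ, (∀ i j, |a i j| ≤ 1) →
          |‖∑ i : Fin m, ∑ j : Fin n, a i j • x j (l i j)‖ -
            ‖∑ i : Fin m, ∑ j : Fin n, a i j • x j (k i j)‖| ≤ ε :=
  statement6_general n m ε hε x hnorm

end
end

section
/- Let n, m ∈ ℕ, ε > 0, and let (x^{(1)}_i)_i, ..., (x^{(n)}_i)_i be normalized weakly null sequences in a Banach space X. Then there exists an infinite subset L of ℕ such that for all integers in L with k_1^{(1)} < k_1^{(2)} < ... < k_1^{(n)} < k_2^{(1)} < ... < k_2^{(n)} < ... < k_m^{(1)} < ... < k_m^{(n)}, the finite sequence of vectors (x^{(j)}_{k^{(j)}_i})_{i=1,...,m, j=1,...,n} forms a suppression (1+ε)-unconditional basic sequence. -/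
open scoped BigOperators ENNReal NNReal
open Filter

noncomputable section

/-!
Ramsey's theorem, applied to a finite net of coefficient vectors, gives an infinite `L` on which
`‖∑ aᵢ yᵢ(κᵢ)‖` depends, up to `δ‖a‖`, only on `a` and not on the increasing tuple `κ` from `L`.
To suppress one coordinate `i`, keep the earlier indices, push the later ones far out, and put at
position `i` a convex combination `c` of terms `yᵢ(v)` of norm `< δ` (Mazur: `0` lies in the
closed convex hull of every subsequence of a weakly null sequence). Since the norm is convex,
some single `v` does at least as well as `c`, and stability compares that tuple with `κ`: removing
a coordinate costs at most `3δ‖a‖`. Iterating over the suppressed set and using the lower bound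
`|aᵢ| = ‖aᵢ yᵢ(κᵢ)‖` yields the constant `1 + ε`.
-/

open Set Function

section Ramsey

theorem exists_infinite_subset_cons_const {C : Type*} {N : ℕ} (c : (Fin (N + 1) → ℕ) → C)
    (ih : ∀ (c' : (Fin N → ℕ) → C) {S : Set ℕ}, S.Infinite → ∃ T ⊆ S, T.Infinite ∧
      ∃ c₀, ∀ g : Fin N → ℕ, StrictMono g → range g ⊆ T → c' g = c₀)
    {A : Set ℕ} (hA : A.Infinite) :
    ∃ a ∈ A, ∃ B ⊆ A ∩ Ioi a, B.Infinite ∧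
      ∃ c₀, ∀ g : Fin N → ℕ, StrictMono g → range g ⊆ B → c (Fin.cons a g) = c₀ := by
  obtain ⟨a, ha⟩ := hA.nonempty
  have hA' : (A ∩ Ioi a).Infinite := by
    simpa only [← Set.sdiff_compl, compl_Ioi] using hA.sdiff (finite_Iic a)
  obtain ⟨B, hBA, hB, c₀, hc₀⟩ := ih (fun g => c (Fin.cons a g)) hA'
  exact ⟨a, ha, B, hBA, hB, c₀, hc₀⟩

variable {C : Type*} [Finite C]

/-- Infinite Ramsey theorem; an `N`-element subset of `ℕ` is encoded by its increasing
enumeration. -/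
theorem exists_infinite_subset_strictMono_const (N : ℕ) (c : (Fin N → ℕ) → C)
    {S : Set ℕ} (hS : S.Infinite) :
    ∃ T ⊆ S, T.Infinite ∧ ∃ c₀, ∀ g : Fin N → ℕ, StrictMono g → range g ⊆ T → c g = c₀ := by
  induction N generalizing S with
  | zero =>
    exact ⟨S, subset_rfl, hS, c finZeroElim, fun g _ _ => congrArg c (funext finZeroElim)⟩
  | succ N ih =>
    choose a ha B hBA hB col hcol using
      fun (A : {A : Set ℕ // A.Infinite}) => exists_infinite_subset_cons_const c ih A.2
    let A : ℕ → {A : Set ℕ // A.Infinite} := fun i => (fun A => ⟨B A, hB A⟩)^[i] ⟨S, hS⟩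
    have hA_succ (i : ℕ) : (A (i + 1)).1 = B (A i) := by
      simp only [A, iterate_succ_apply']
    have hA_anti : Antitone fun i => (A i).1 := antitone_nat_of_succ_le fun i =>
      (hA_succ i).trans_subset ((hBA _).trans inter_subset_left)
    have hA_gt {i j : ℕ} (hij : i < j) : a (A j) ∈ B (A i) :=
      hA_succ i ▸ hA_anti hij (ha (A j))
    have ha_mono : StrictMono fun i => a (A i) := fun i j hij => ((hBA _) (hA_gt hij)).2
    obtain ⟨c₀, hc₀⟩ := Finite.exists_infinite_fiber fun i => col (A i)
    refine ⟨(fun i => a (A i)) '' ((fun i => col (A i)) ⁻¹' {c₀}), ?_, ?_, c₀, ?_⟩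
    · rintro _ ⟨i, -, rfl⟩
      exact hA_anti (Nat.zero_le i) (ha (A i))
    · exact (infinite_coe_iff.mp hc₀).image ha_mono.injective.injOn
    · intro g hg hgT
      obtain ⟨i, hi, hgi⟩ := hgT ⟨0, rfl⟩
      dsimp only at hgi
      have htail : range (Fin.tail g) ⊆ B (A i) := by
        rintro _ ⟨s, rfl⟩
        obtain ⟨j, -, hj⟩ := hgT ⟨s.succ, rfl⟩
        dsimp only at hj
        have hij : i < j := ha_mono.lt_iff_lt.mp (by rw [hgi, hj]; exact hg (Fin.succ_pos s))
        rw [Fin.tail, ← hj]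
        exact hA_gt hij
      have htail_mono : StrictMono (Fin.tail g) := fun s t hst => hg (Fin.succ_lt_succ_iff.mpr hst)
      rw [← Fin.cons_self_tail g, ← hgi, hcol _ _ htail_mono htail]
      exact hi

theorem exists_infinite_strictMono_const {ι : Type*} [Fintype ι] [LinearOrder ι]
    (c : (ι → ℕ) → C) :
    ∃ T : Set ℕ, T.Infinite ∧ ∃ c₀, ∀ g : ι → ℕ, StrictMono g → range g ⊆ T → c g = c₀ := by
  let e := Fintype.orderIsoFinOfCardEq ι rfl
  obtain ⟨T, -, hT, c₀, hc₀⟩ :=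
    exists_infinite_subset_strictMono_const _ (fun g => c (g ∘ e.symm)) infinite_univ
  refine ⟨T, hT, c₀, fun g hg hgT => ?_⟩
  have := hc₀ (g ∘ e) (hg.comp e.strictMono) ((range_comp_subset_range _ _).trans hgT)
  simpa [Function.comp_def] using this

end Ramsey

theorem exists_infinite_dist_lt_of_totallyBounded {ι E : Type*} [Fintype ι] [LinearOrder ι]
    [PseudoMetricSpace E] (f : (ι → ℕ) → E) (hf : TotallyBounded (range f)) {δ : ℝ}
    (hδ : 0 < δ) :
    ∃ T : Set ℕ, T.Infinite ∧ ∀ g g' : ι → ℕ, StrictMono g → StrictMono g' →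
      range g ⊆ T → range g' ⊆ T → dist (f g) (f g') < δ := by
  obtain ⟨t, ht, hft⟩ := Metric.totallyBounded_iff.mp hf (δ / 2) (half_pos hδ)
  have : Finite t := ht.to_subtype
  have hcover (g : ι → ℕ) : ∃ z : t, f g ∈ Metric.ball (z : E) (δ / 2) := by
    simpa using hft (mem_range_self g)
  choose centre hcentre using hcover
  obtain ⟨T, hT, z, hz⟩ := exists_infinite_strictMono_const centre
  refine ⟨T, hT, fun g g' hg hg' hgT hg'T => ?_⟩
  have h := Metric.mem_ball.mp (hcentre g)
  have h' := Metric.mem_ball.mp (hcentre g')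
  rw [hz g hg hgT] at h
  rw [hz g' hg' hg'T] at h'
  exact (dist_triangle_right _ _ _).trans_lt (by linarith)

section WeaklyNull

variable {X : Type*} [NormedAddCommGroup X] [NormedSpace ℝ X] {y : ℕ → X}

theorem IsWeaklyNull.zero_mem_closure_convexHull (hy : IsWeaklyNull y) {S : Set ℕ}
    (hS : S.Infinite) : (0 : X) ∈ closure (convexHull ℝ (y '' S)) := by
  by_contra h0
  obtain ⟨f, u, hfu, hu⟩ :=
    geometric_hahn_banach_closed_point (convex_convexHull ℝ _).closure isClosed_closure h0
  rw [map_zero] at hu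
  obtain ⟨M, hM⟩ := Filter.eventually_atTop.mp ((hy f).eventually (eventually_gt_nhds hu))
  obtain ⟨i, hiS, hiM⟩ := hS.exists_gt M
  exact (hM i hiM.le).not_gt (hfu _ (subset_closure (subset_convexHull ℝ _ ⟨i, hiS, rfl⟩)))

theorem IsWeaklyNull.exists_finset_mem_convexHull_norm_lt (hy : IsWeaklyNull y) {S : Set ℕ}
    (hS : S.Infinite) {δ : ℝ} (hδ : 0 < δ) :
    ∃ s : Finset ℕ, ↑s ⊆ S ∧ ∃ c ∈ convexHull ℝ (y '' s), ‖c‖ < δ := by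
  classical
  obtain ⟨c, hc, hcδ⟩ := Metric.mem_closure_iff.mp (hy.zero_mem_closure_convexHull hS) δ hδ
  rw [convexHull_eq_union_convexHull_finite_subsets, mem_iUnion₂] at hc
  obtain ⟨t, hty, hct⟩ := hc
  obtain ⟨s, hsS, rfl⟩ := Finset.subset_set_image_iff.mp hty
  exact ⟨s, hsS, c, by simpa using hct, by simpa using hcδ⟩

end WeaklyNull

section FiniteFamily

variable {ι X : Type*} [Fintype ι] [NormedAddCommGroup X] [NormedSpace ℝ X]

/-- The kept set `s` stands for the complement of the suppressed set `F` of the usual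
definition. -/
def IsSuppressionUnconditional (C : ℝ) (v : ι → X) : Prop :=
  ∀ (a : ι → ℝ) (s : Finset ι), ‖∑ i ∈ s, a i • v i‖ ≤ C * ‖∑ i, a i • v i‖

theorem IsSuppressionUnconditional.linearIndependent {C : ℝ} {v : ι → X}
    (h : IsSuppressionUnconditional C v) (hv : ∀ i, v i ≠ 0) : LinearIndependent ℝ v := by
  refine Fintype.linearIndependent_iff.mpr fun a ha i => ?_
  have hi := h a {i}
  rw [ha, norm_zero, mul_zero, Finset.sum_singleton, norm_le_zero_iff] at hi
  exact (smul_eq_zero.mp hi).resolve_right (hv i)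

theorem IsSuppressionUnconditional.comp_equiv {ι' : Type*} [Fintype ι'] {C : ℝ} {v : ι → X}
    (h : IsSuppressionUnconditional C v) (e : ι' ≃ ι) : IsSuppressionUnconditional C (v ∘ e) := by
  intro a s
  have key := h (a ∘ e.symm) (s.map e.toEmbedding)
  rw [Finset.sum_map, ← e.sum_comp] at key
  simpa using key

theorem norm_linearCombination_le (v : ι → X) (hv : ∀ i, ‖v i‖ ≤ 1) (a : ι → ℝ) :
    ‖Fintype.linearCombination ℝ v a‖ ≤ Fintype.card ι * ‖a‖ := by
  rw [Fintype.linearCombination_apply]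
  calc ‖∑ i, a i • v i‖ ≤ ∑ i, ‖a i‖ * ‖v i‖ := norm_sum_le_of_le _ fun i _ => norm_smul_le _ _
    _ ≤ ∑ _i : ι, ‖a‖ := Finset.sum_le_sum fun i _ =>
        (mul_le_of_le_one_right (norm_nonneg _) (hv i)).trans (norm_le_pi_norm a i)
    _ = Fintype.card ι * ‖a‖ := by rw [Finset.sum_const, Finset.card_univ, nsmul_eq_mul]

theorem norm_piecewise_zero_le [DecidableEq ι] (F : Finset ι) (a : ι → ℝ) :
    ‖F.piecewise (0 : ι → ℝ) a‖ ≤ ‖a‖ := by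
  refine (pi_norm_le_iff_of_nonneg (norm_nonneg a)).mpr fun i => ?_
  by_cases hi : i ∈ F
  · simp [hi]
  · simpa [hi] using norm_le_pi_norm a i

theorem le_add_mul_card_of_update_zero_le [DecidableEq ι] {Φ : (ι → ℝ) → ℝ} {c : ℝ}
    (hc : 0 ≤ c) (h : ∀ a i, Φ (update a i 0) ≤ Φ a + c * ‖a‖) (F : Finset ι) (a : ι → ℝ) :
    Φ (F.piecewise (0 : ι → ℝ) a) ≤ Φ a + c * F.card * ‖a‖ := by
  induction F using Finset.induction_on with
  | empty => simp
  | insert i F hi ih =>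
    rw [Finset.piecewise_insert, Finset.card_insert_of_notMem hi, Pi.zero_apply]
    have := mul_le_mul_of_nonneg_left (norm_piecewise_zero_le F a) hc
    push_cast
    linarith [h (F.piecewise (0 : ι → ℝ) a) i]

theorem isSuppressionUnconditional_of_norm_piecewise_le [DecidableEq ι] {v : ι → X}
    (hv : ∀ i, ‖v i‖ = 1) {ε : ℝ} (hε : 0 ≤ ε)
    (h : ∀ (a : ι → ℝ) (F : Finset ι), ‖Fintype.linearCombination ℝ v (F.piecewise (0 : ι → ℝ) a)‖ ≤
      ‖Fintype.linearCombination ℝ v a‖ + ε / (1 + ε) * ‖a‖) :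
    IsSuppressionUnconditional (1 + ε) v := by
  set L := Fintype.linearCombination ℝ v
  have hη : 0 ≤ ε / (1 + ε) := div_nonneg hε (by linarith)
  have hlower (a : ι → ℝ) : ‖a‖ ≤ ‖L a‖ + ε / (1 + ε) * ‖a‖ := by
    refine (pi_norm_le_iff_of_nonneg (by positivity)).mpr fun i => ?_
    have hsingle : (Finset.univ.erase i).piecewise (0 : ι → ℝ) a = Pi.single i (a i) := by
      ext j
      by_cases hj : j = i <;> simp [hj]
    have := h a (Finset.univ.erase i)
    rwa [hsingle, Fintype.linearCombination_apply_single, norm_smul, hv, mul_one] at this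
  intro a s
  have hs : ∑ i ∈ s, a i • v i = L (sᶜ.piecewise 0 a) := by
    rw [Finset.piecewise_compl, Fintype.linearCombination_apply]
    simp [Finset.piecewise]
  rw [hs, ← Fintype.linearCombination_apply]
  set η := ε / (1 + ε)
  have hη_eq : η * ‖a‖ = ε * ‖a‖ - ε * (η * ‖a‖) := by
    simp only [η]
    field_simp
    ring
  linarith [h a sᶜ, mul_le_mul_of_nonneg_left (hlower a) hε]

end FiniteFamily

theorem abs_norm_sub_norm_le_mul_norm_of_norm_le_one {E X : Type*} [NormedAddCommGroup E]
    [NormedSpace ℝ E] [NormedAddCommGroup X] [NormedSpace ℝ X] {L L' : E →ₗ[ℝ] X} {δ : ℝ}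
    (h : ∀ a, ‖a‖ ≤ 1 → |‖L a‖ - ‖L' a‖| ≤ δ) (a : E) : |‖L a‖ - ‖L' a‖| ≤ δ * ‖a‖ := by
  rcases eq_or_ne a 0 with rfl | ha
  · simp
  have hb := h (‖a‖⁻¹ • a) (norm_smul_inv_norm ha).le
  rwa [map_smul, map_smul, norm_smul, norm_smul, ← mul_sub, abs_mul, Real.norm_eq_abs,
    abs_abs, abs_inv, abs_norm, inv_mul_le_iff₀ (norm_pos_iff.mpr ha), mul_comm] at hb

theorem linearCombination_eq_update_zero_add {ι X : Type*} [Fintype ι] [DecidableEq ι]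
    [AddCommGroup X] [Module ℝ X] {w w' : ι → X} (i : ι) (h : ∀ j ≠ i, w j = w' j)
    (a : ι → ℝ) :
    Fintype.linearCombination ℝ w a =
      Fintype.linearCombination ℝ w' (update a i 0) + a i • w i := by
  simp only [Fintype.linearCombination_apply]
  rw [← Finset.add_sum_erase _ _ (Finset.mem_univ i),
    ← Finset.add_sum_erase _ _ (Finset.mem_univ i), update_self, zero_smul, zero_add, add_comm]
  congr 1
  refine Finset.sum_congr rfl fun j hj => ?_
  rw [update_of_ne (Finset.ne_of_mem_erase hj), h j (Finset.ne_of_mem_erase hj)]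

theorem StrictMono.update_of_lt_of_gt {α β : Type*} [LinearOrder α] [Preorder β] {f : α → β}
    (hf : StrictMono f) {i : α} {v : β} (hlt : ∀ j < i, f j < v) (hgt : ∀ j, i < j → v < f j) :
    StrictMono (update f i v) := by
  intro j j' hjj'
  by_cases hj : j = i <;> by_cases hj' : j' = i
  · exact absurd hjj' (by rw [hj, hj']; exact lt_irrefl i)
  · subst hj
    simpa [hj'] using hgt j' hjj'
  · subst hj'
    simpa [hj] using hlt j hjj'
  · simpa [hj, hj'] using hf hjj'

theorem exists_strictMono_shift_after {ι : Type*} [LinearOrder ι] {T : Set ℕ}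
    (hT : T.Infinite) {κ : ι → ℕ} (hκ : StrictMono κ) (hκT : range κ ⊆ T) (i : ι) (B : ℕ) :
    ∃ κ₀ : ι → ℕ, StrictMono κ₀ ∧ range κ₀ ⊆ T ∧ (∀ j ≤ i, κ₀ j = κ j) ∧
      ∀ j, i < j → B < κ₀ j := by
  have hinf : (T \ Iic B).Infinite := hT.sdiff (finite_Iic B)
  set g := Nat.nth (· ∈ T \ Iic B)
  have hg : StrictMono g := Nat.nth_strictMono hinf
  have hgT (n : ℕ) : g n ∈ T \ Iic B := Nat.nth_mem_of_infinite hinf n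
  refine ⟨fun j => if i < j then g (κ j) else κ j, fun j j' hjj' => ?_, ?_, fun j hj => ?_,
    fun j hj => ?_⟩
  · dsimp only
    split_ifs with h h'
    · exact hg (hκ hjj')
    · exact absurd (h.trans hjj') h'
    · exact (hκ hjj').trans_le (hg.id_le _)
    · exact hκ hjj'
  · rintro _ ⟨j, rfl⟩
    dsimp only
    split_ifs
    exacts [(hgT _).1, hκT ⟨j, rfl⟩]
  · simp [hj.not_gt]
  · simpa [hj] using (hgT (κ j)).2

theorem exists_strictMono_update_strictMono {ι : Type*} [LinearOrder ι] {T : Set ℕ}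
    (hT : T.Infinite) {κ : ι → ℕ} (hκ : StrictMono κ) (hκT : range κ ⊆ T) (i : ι) {M : ℕ}
    (hM : ∀ j, κ j ≤ M) (B : ℕ) :
    ∃ κ₀ : ι → ℕ, StrictMono κ₀ ∧ range κ₀ ⊆ T ∧ ∀ v ∈ T, M < v → v ≤ B →
      StrictMono (update κ₀ i v) ∧ range (update κ₀ i v) ⊆ T := by
  obtain ⟨κ₀, hκ₀, hκ₀T, hκ₀_le, hκ₀_gt⟩ := exists_strictMono_shift_after hT hκ hκT i B
  refine ⟨κ₀, hκ₀, hκ₀T, fun v hvT hMv hvB => ⟨hκ₀.update_of_lt_of_gt (fun j hj => ?_)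
    (fun j hj => hvB.trans_lt (hκ₀_gt j hj)), ?_⟩⟩
  · rw [hκ₀_le j hj.le]
    exact (hM j).trans_lt hMv
  · rintro _ ⟨j, rfl⟩
    rcases eq_or_ne j i with rfl | hj
    · simpa using hvT
    · simpa [hj] using hκ₀T ⟨j, rfl⟩

section Stabilisation

variable {ι X : Type*} [Fintype ι] [LinearOrder ι] [NormedAddCommGroup X] [NormedSpace ℝ X]

def IsNormStableOn (y : ι → ℕ → X) (T : Set ℕ) (δ : ℝ) : Prop :=
  ∀ κ κ' : ι → ℕ, StrictMono κ → StrictMono κ' → range κ ⊆ T → range κ' ⊆ T → ∀ a : ι → ℝ,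
    |‖Fintype.linearCombination ℝ (fun i => y i (κ i)) a‖ -
      ‖Fintype.linearCombination ℝ (fun i => y i (κ' i)) a‖| ≤ δ * ‖a‖

theorem exists_infinite_isNormStableOn (y : ι → ℕ → X) (hy : ∀ i n, ‖y i n‖ ≤ 1) {δ : ℝ}
    (hδ : 0 < δ) : ∃ T : Set ℕ, T.Infinite ∧ IsNormStableOn y T δ := by
  set N : ℝ := (Fintype.card ι : ℝ)
  set L : (ι → ℕ) → (ι → ℝ) →ₗ[ℝ] X := fun κ => Fintype.linearCombination ℝ (fun i => y i (κ i))
  have hL (κ : ι → ℕ) (a : ι → ℝ) : ‖L κ a‖ ≤ N * ‖a‖ :=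
    norm_linearCombination_le _ (fun i => hy i (κ i)) a
  set η := δ / (2 * N + 1)
  have hη : 0 < η := by positivity
  obtain ⟨t, ht1, ht, hcover⟩ :=
    finite_cover_balls_of_compact (isCompact_closedBall (0 : ι → ℝ) 1) hη
  have : Fintype t := ht.fintype
  set f : (ι → ℕ) → (t → ℝ) := fun κ x => ‖L κ x‖
  have hf : TotallyBounded (range f) := by
    refine (isCompact_closedBall (0 : t → ℝ) N).totallyBounded.subset ?_
    rintro _ ⟨κ, rfl⟩
    refine mem_closedBall_zero_iff.mpr ((pi_norm_le_iff_of_nonneg (by positivity)).mpr fun x => ?_)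
    rw [norm_norm]
    exact (hL κ x).trans (mul_le_of_le_one_right (by positivity)
      (mem_closedBall_zero_iff.mp (ht1 x.2)))
  obtain ⟨T, hT, hTf⟩ := exists_infinite_dist_lt_of_totallyBounded f hf hη
  refine ⟨T, hT, fun κ κ' hκ hκ' hκT hκ'T =>
    abs_norm_sub_norm_le_mul_norm_of_norm_le_one fun a ha => ?_⟩
  obtain ⟨x, hxt, hax⟩ : ∃ x ∈ t, a ∈ Metric.ball x η := by
    simpa using hcover (mem_closedBall_zero_iff.mpr ha)
  have hnear (κ : ι → ℕ) : |‖L κ a‖ - ‖L κ x‖| ≤ N * η := by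
    refine (abs_norm_sub_norm_le _ _).trans ?_
    rw [← map_sub]
    exact (hL κ _).trans (by gcongr; exact (mem_ball_iff_norm.mp hax).le)
  have hx : |‖L κ x‖ - ‖L κ' x‖| < η :=
    (dist_le_pi_dist (f κ) (f κ') ⟨x, hxt⟩).trans_lt (hTf κ κ' hκ hκ' hκT hκ'T)
  have hδη : δ = 2 * N * η + η := by
    have : 2 * N + 1 ≠ 0 := by positivity
    simp only [η]
    field_simp
  have h1 := abs_le.mp (hnear κ)
  have h2 := abs_le.mp (hnear κ')
  have h3 := abs_lt.mp hx
  rw [abs_le]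
  constructor <;> linarith

theorem IsNormStableOn.norm_linearCombination_update_zero_le {y : ι → ℕ → X} {T : Set ℕ}
    {δ : ℝ} (hstab : IsNormStableOn y T δ) (hwn : ∀ i, IsWeaklyNull (y i)) (hT : T.Infinite)
    (hδ : 0 < δ) {κ : ι → ℕ} (hκ : StrictMono κ) (hκT : range κ ⊆ T) (a : ι → ℝ) (i : ι) :
    ‖Fintype.linearCombination ℝ (fun i => y i (κ i)) (update a i 0)‖ ≤
      ‖Fintype.linearCombination ℝ (fun i => y i (κ i)) a‖ + 3 * δ * ‖a‖ := by
  set L : (ι → ℕ) → (ι → ℝ) →ₗ[ℝ] X := fun κ => Fintype.linearCombination ℝ (fun i => y i (κ i))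
  have hstab' {κ κ' : ι → ℕ} (hκ : StrictMono κ) (hκ' : StrictMono κ') (hκT : range κ ⊆ T)
      (hκ'T : range κ' ⊆ T) (b : ι → ℝ) : ‖L κ b‖ ≤ ‖L κ' b‖ + δ * ‖b‖ := by
    linarith [(abs_le.mp (hstab κ κ' hκ hκ' hκT hκ'T b)).2]
  obtain ⟨M, hM⟩ := (finite_range κ).bddAbove
  obtain ⟨s, hsT, c, hc, hcδ⟩ :=
    (hwn i).exists_finset_mem_convexHull_norm_lt (hT.sdiff (finite_Iic M)) hδ
  obtain ⟨κ₀, hκ₀, hκ₀T, hκv⟩ :=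
    exists_strictMono_update_strictMono hT hκ hκT i (fun j => hM ⟨j, rfl⟩) (s.sup id)
  set u := L κ₀ (update a i 0)
  have hLv (v : ℕ) : L (update κ₀ i v) a = u + a i • y i v := by
    simpa using linearCombination_eq_update_zero_add (w := fun j => y j (update κ₀ i v j))
      (w' := fun j => y j (κ₀ j)) i (fun j hj => by simp [hj]) a
  have hupd : ‖update a i 0‖ ≤ ‖a‖ := by
    simpa [Finset.piecewise_singleton] using norm_piecewise_zero_le {i} a
  have hconv : ConvexOn ℝ univ fun z : X => ‖u + a i • z‖ := by
    simpa [Function.comp_def] using (convexOn_univ_norm (E := X)).comp_affineMap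
      (AffineMap.const ℝ X u + a i • AffineMap.id ℝ X)
  obtain ⟨_, ⟨v, hv, rfl⟩, hcv⟩ := hconv.exists_ge_of_mem_convexHull (subset_univ _) hc
  have hc' : ‖a i • c‖ ≤ δ * ‖a‖ := by
    rw [norm_smul, mul_comm]
    exact mul_le_mul hcδ.le (norm_le_pi_norm a i) (norm_nonneg _) hδ.le
  have h1 : ‖L κ (update a i 0)‖ ≤ ‖u‖ + δ * ‖a‖ := by
    linarith [hstab' hκ hκ₀ hκT hκ₀T (update a i 0), mul_le_mul_of_nonneg_left hupd hδ.le]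
  have h2 : ‖u‖ ≤ ‖u + a i • c‖ + δ * ‖a‖ := by
    have := norm_sub_le (u + a i • c) (a i • c)
    rw [add_sub_cancel_right] at this
    linarith
  have h3 : ‖u + a i • y i v‖ ≤ ‖L κ a‖ + δ * ‖a‖ := by
    have hvT : v ∈ T \ Iic M := hsT hv
    obtain ⟨hκv_mono, hκvT⟩ := hκv v hvT.1 (not_le.mp hvT.2) (Finset.le_sup (f := id) hv)
    rw [← hLv]
    exact hstab' hκv_mono hκ hκvT hκT a
  linarith

end Stabilisation

theorem exists_infinite_forall_isSuppressionUnconditional {ι X : Type*} [Fintype ι]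
    [LinearOrder ι] [NormedAddCommGroup X] [NormedSpace ℝ X] (y : ι → ℕ → X)
    (hnorm : ∀ i, IsNormalizedSeq (y i)) (hwn : ∀ i, IsWeaklyNull (y i)) {ε : ℝ} (hε : 0 < ε) :
    ∃ L : Set ℕ, L.Infinite ∧ ∀ κ : ι → ℕ, StrictMono κ → range κ ⊆ L →
      IsSuppressionUnconditional (1 + ε) fun i => y i (κ i) := by
  set N : ℝ := (Fintype.card ι : ℝ)
  set δ := ε / (1 + ε) / (3 * (N + 1))
  have hδ : 0 < δ := by positivity
  obtain ⟨T, hT, hstab⟩ :=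
    exists_infinite_isNormStableOn y (fun i n => (hnorm i n).le) hδ
  refine ⟨T, hT, fun κ hκ hκT => isSuppressionUnconditional_of_norm_piecewise_le
    (fun i => hnorm i (κ i)) hε.le fun a F => ?_⟩
  have hF : 3 * δ * F.card ≤ ε / (1 + ε) := by
    have : (F.card : ℝ) ≤ N + 1 := by
      have := F.card_le_univ
      simp only [N]
      exact_mod_cast this.trans (Nat.le_succ _)
    calc 3 * δ * F.card ≤ 3 * δ * (N + 1) := by gcongr
      _ = ε / (1 + ε) := by
        have : N + 1 ≠ 0 := by positivity
        simp only [δ]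
        field_simp
  have hΦ := le_add_mul_card_of_update_zero_le (c := 3 * δ)
    (Φ := fun b => ‖Fintype.linearCombination ℝ (fun i => y i (κ i)) b‖) (by positivity)
    (hstab.norm_linearCombination_update_zero_le hwn hT hδ hκ hκT) F a
  exact hΦ.trans (by gcongr)

/-- **Lemma 3.5.** For normalized weakly null sequences `(x^{(1)}_i), …, (x^{(n)}_i)`
and `ε > 0` there is an infinite `L ⊆ ℕ` such that every interleaved family
`(x^{(j)}_{k^{(j)}_i})_{i≤m, j≤n}` with indices in `L` is a suppression
`(1+ε)`-unconditional basic sequence. -/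
theorem statement7 {X : Type*} [NormedAddCommGroup X] [NormedSpace ℝ X]
    (n m : ℕ) (ε : ℝ) (hε : 0 < ε)
    (x : Fin n → ℕ → X) (hnorm : ∀ j, IsNormalizedSeq (x j))
    (hwn : ∀ j, IsWeaklyNull (x j)) :
    ∃ L : Set ℕ, L.Infinite ∧
      ∀ k : Fin m → Fin n → ℕ,
        (∀ i j, k i j ∈ L) →
        (∀ (i i' : Fin m) (j j' : Fin n),
          (i < i' ∨ (i = i' ∧ j < j')) → k i j < k i' j') →
        LinearIndependent ℝ (fun p : Fin m × Fin n => x p.2 (k p.1 p.2)) ∧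
        ∀ (a : Fin m → Fin n → ℝ) (F : Finset (Fin m × Fin n)),
          ‖∑ p ∈ Finset.univ \ F, a p.1 p.2 • x p.2 (k p.1 p.2)‖ ≤
            (1 + ε) * ‖∑ p : Fin m × Fin n, a p.1 p.2 • x p.2 (k p.1 p.2)‖ := by
  obtain ⟨L, hL, hLsupp⟩ := exists_infinite_forall_isSuppressionUnconditional
    (fun p : Fin m ×ₗ Fin n => x (ofLex p).2) (fun p => hnorm _) (fun p => hwn _) hε
  refine ⟨L, hL, fun k hkL hk => ?_⟩
  have hκ : StrictMono fun p : Fin m ×ₗ Fin n => k (ofLex p).1 (ofLex p).2 :=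
    fun p q hpq => hk _ _ _ _ (Prod.Lex.lt_iff.mp hpq)
  have hsupp := (hLsupp _ hκ (by rintro _ ⟨p, rfl⟩; exact hkL _ _)).comp_equiv toLex
  refine ⟨hsupp.linearIndependent fun p => ?_, fun a F => hsupp (fun p => a p.1 p.2) _⟩
  show x p.2 (k p.1 p.2) ≠ 0
  exact norm_ne_zero_iff.mp (by rw [hnorm]; exact one_ne_zero)

end
end

section
/- Let X be a Banach space and (x_i) a normalized weakly null basic sequence in X which has a spreading model (x̃_i) not equivalent to the unit vector basis of ℓ₁. Then for every sequence (δ_n)_{n ≥ 2} ⊂ (0,1) there exist a subsequence (x_{m_i}) of (x_i), an increasing sequence of integers M_1 < M_2 < ⋯, and δ_1 > 0 such that for all finitely supported scalars (a_i) one has ‖Σ_i a_i x_{m_i}‖ ≤ sup_{n ∈ ℕ} δ_n ‖(a_i)‖_{ℓ₁(𝒢_n)}, where 𝒢_n = {G ⊆ ℕ : |G| ≤ M_n}. -/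
/-!
The spreading model `x̃` of the weakly null sequence `x` is spreading and, by Mazur's lemma,
suppression `1`-unconditional. If `‖x̃₀ + ⋯ + x̃_{n-1}‖ ≥ δ n` for all `n`, a functional norming a
long such sum is `≥ δ / 2` on many `x̃ᵢ`, which makes `x̃` equivalent to the `ℓ₁` basis; so these
averages become arbitrarily small, and we choose `ν₂ < ν₃ < ⋯` with
`‖x̃₀ + ⋯ + x̃_{ν_j - 1}‖ ≤ ρ_j ν_j`, `ρ_j = δ_j / (20 · 2^j)`, and pass to `x (2 ν_i)`.

For scalars `a`, the set of `i` with `|a_i| > ell1G (M_j) a / M_j` has at most `M_j` elements and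
grows with `j` when `M_j ∣ M_{j+1}`. On its `j`-th increment all `|a_i|` are at most
`ell1G (M_{j-1}) a / M_{j-1}`; cutting it into dyadic coefficient ranges and then into blocks of
`ν_j` to `2ν_j` terms, each block is almost a sum of `x̃`'s and has norm at most `10 ρ_j` times its
`ℓ₁` mass, up to an error `3 ν_j ell1G (M_{j-1}) a / M_{j-1}`. Choosing `M_{j-1} ≫ ν_j / δ_j`, the
`j`-th increment costs at most `2^{-j} δ_j ell1G (M_j) a`, and summing over `j` gives the claim
with `δ₁ = 2`.
-/

open scoped BigOperators ENNReal NNReal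
open Filter

noncomputable section

/-- `‖(a_i)‖_{ℓ₁(𝒢)}` where `𝒢 = {G ⊆ ℕ : |G| ≤ M}`. -/
def ell1G (M : ℕ) (a : ℕ →₀ ℝ) : ℝ :=
  sSup {t | ∃ G : Finset ℕ, G.card ≤ M ∧ t = ∑ i ∈ G, |a i|}


open Finset Filter Topology

theorem Finset.exists_strictMonoOn_bijOn_Iio_card (P : Finset ℕ) :
    ∃ e : ℕ → ℕ, StrictMonoOn e (Set.Iio #P) ∧ Set.BijOn e (Set.Iio #P) P := by
  have hf : (Set.ofPred (· ∈ P)).Finite := P.finite_toSet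
  have hc : #hf.toFinset = #P := by congr 1; ext; simp [Set.ofPred]
  have hmono := hc ▸ Nat.nth_strictMonoOn hf
  refine ⟨_, hmono, ?_⟩
  have := hmono.injOn.bijOn_image
  rw [← hc, Nat.image_nth_Iio_card hf] at this
  rw [← hc]
  exact this

theorem Finset.sum_range_ite_lt {M : Type*} [AddCommMonoid M] {m N : ℕ} (h : m ≤ N) (f : ℕ → M) :
    ∑ i ∈ range N, (if i < m then f i else 0) = ∑ i ∈ range m, f i := by
  rw [← sum_filter]
  congr 1
  ext i
  simp only [mem_filter, mem_range]
  omega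

theorem Finset.sum_range_fiberwise_smul {E : Type*} [AddCommMonoid E] [Module ℝ E] {m m' : ℕ}
    {ι : ℕ → ℕ} (hι : ∀ i < m, ι i < m') (b : ℕ → ℝ) (v : ℕ → E) :
    ∑ j ∈ range m', (∑ i ∈ range m with ι i = j, b i) • v j = ∑ i ∈ range m, b i • v (ι i) := by
  rw [← sum_fiberwise_of_maps_to (s := range m) (t := range m') (g := ι) fun i hi => by
    simpa using hι i (by simpa using hi)]
  refine sum_congr rfl fun j _ => ?_
  rw [sum_smul]
  exact sum_congr rfl fun i hi => by rw [(mem_filter.1 hi).2]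

theorem Finset.sum_smul_eq_smul_sum_div {ι E : Type*} [AddCommMonoid E] [Module ℝ E]
    (t : Finset ι) {s : ℝ} (hs : s ≠ 0) (b : ι → ℝ) (v : ι → E) :
    ∑ i ∈ t, b i • v i = s • ∑ i ∈ t, (b i / s) • v i := by
  rw [smul_sum]
  exact sum_congr rfl fun i _ => by rw [smul_smul, mul_div_cancel₀ _ hs]

theorem norm_sum_smul_le_sum_abs {ι E : Type*} [SeminormedAddCommGroup E] [NormedSpace ℝ E]
    (t : Finset ι) (c : ι → ℝ) {v : ι → E} (hv : ∀ i, ‖v i‖ = 1) :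
    ‖∑ i ∈ t, c i • v i‖ ≤ ∑ i ∈ t, |c i| :=
  (norm_sum_le _ _).trans_eq
    (sum_congr rfl fun i _ => by rw [norm_smul, hv, mul_one, Real.norm_eq_abs])

theorem norm_sum_le_of_monotone {α E : Type*} [DecidableEq α] [SeminormedAddCommGroup E]
    {D : ℕ → Finset α} (hD : Monotone D) (hD0 : D 0 = ∅) (f : α → E) (g : α → ℝ) (B : ℕ → ℝ)
    {n : ℕ} (h : ∀ k < n, ‖∑ i ∈ D (k + 1) \ D k, f i‖ ≤ ∑ i ∈ D (k + 1) \ D k, g i + B k) :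
    ‖∑ i ∈ D n, f i‖ ≤ ∑ i ∈ D n, g i + ∑ k ∈ range n, B k := by
  induction n with
  | zero => simp [hD0]
  | succ n ih =>
    have hsub := hD n.le_succ
    rw [← sum_sdiff hsub (f := f), ← sum_sdiff hsub (f := g), sum_range_succ]
    have := ih fun k hk => h k (by omega)
    linarith [norm_add_le (∑ i ∈ D (n + 1) \ D n, f i) (∑ i ∈ D n, f i), h n n.lt_succ_self]

theorem convexOn_norm_add_smul {X : Type*} [NormedAddCommGroup X] [NormedSpace ℝ X] (v : X)
    (c : ℝ) : ConvexOn ℝ Set.univ fun z : X => ‖v + c • z‖ := by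
  convert ((convexOn_norm (E := X) convex_univ).translate_right v).comp_linearMap
    (c • LinearMap.id) using 1
  · simp
  · ext z
    simp

theorem le_of_eventually_le_add_mul {ε : ℕ → ℝ} (hε : Tendsto ε atTop (𝓝 0)) {A B C : ℝ}
    (h : ∀ᶠ N in atTop, A ≤ B + C * ε N) : A ≤ B := by
  simpa using ge_of_tendsto ((hε.const_mul C).const_add B) h

theorem eq_of_eventually_abs_sub_le_mul {ε : ℕ → ℝ} (hε : Tendsto ε atTop (𝓝 0)) {A B C : ℝ}
    (h : ∀ᶠ N in atTop, |A - B| ≤ C * ε N) : A = B :=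
  le_antisymm
    (le_of_eventually_le_add_mul hε (C := C) (h.mono fun _ hN => by linarith [(abs_le.1 hN).2]))
    (le_of_eventually_le_add_mul hε (C := C) (h.mono fun _ hN => by linarith [(abs_le.1 hN).1]))

theorem lpNormFin_one {n : ℕ} (a : Fin n → ℝ) : lpNormFin 1 a = ∑ i, |a i| := by
  simp [lpNormFin]

namespace IsWeaklyNull

variable {X : Type*} [NormedAddCommGroup X] [NormedSpace ℝ X] {x : ℕ → X}

theorem zero_mem_closure_convexHull_s18 (hx : IsWeaklyNull x) (J : ℕ) :
    (0 : X) ∈ closure (convexHull ℝ (x '' Set.Ici J)) := by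
  by_contra h
  obtain ⟨f, u, hfu, hu⟩ :=
    geometric_hahn_banach_closed_point (convex_convexHull ℝ _).closure isClosed_closure h
  rw [map_zero] at hu
  obtain ⟨j, hj, hfj⟩ :=
    ((eventually_ge_atTop J).and ((hx f).eventually (Ioi_mem_nhds hu))).exists
  exact lt_asymm hfj (hfu _ (subset_closure (subset_convexHull ℝ _ ⟨j, hj, rfl⟩)))

/-- Mazur's lemma, localised to a finite window of indices. -/
theorem exists_mem_convexHull_Icc_norm_le (hx : IsWeaklyNull x) (J : ℕ) {γ : ℝ} (hγ : 0 < γ) :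
    ∃ J', ∃ y ∈ convexHull ℝ (x '' Set.Icc J J'), ‖y‖ ≤ γ := by
  obtain ⟨y, hy, hyγ⟩ := Metric.mem_closure_iff.1 (hx.zero_mem_closure_convexHull_s18 J) γ hγ
  rw [convexHull_eq_union_convexHull_finite_subsets, Set.mem_iUnion₂] at hy
  obtain ⟨t, hts, hyt⟩ := hy
  have : ∀ z ∈ t, ∃ j, J ≤ j ∧ x j = z := fun z hz => hts hz
  choose! k hkJ hxk using this
  refine ⟨t.sup k, y, convexHull_mono ?_ hyt, by simpa using hyγ.le⟩
  intro z hz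
  exact ⟨k z, ⟨hkJ z hz, le_sup hz⟩, hxk z hz⟩

end IsWeaklyNull

theorem Finsupp.sum_abs_le_sum_support_abs (a : ℕ →₀ ℝ) (G : Finset ℕ) :
    ∑ i ∈ G, |a i| ≤ ∑ i ∈ a.support, |a i| := by
  rw [← sum_filter_ne_zero]
  exact sum_le_sum_of_subset_of_nonneg (fun i hi => by simpa using (mem_filter.1 hi).2)
    fun _ _ _ => abs_nonneg _

theorem bddAbove_ell1G_set (M : ℕ) (a : ℕ →₀ ℝ) :
    BddAbove {t | ∃ G : Finset ℕ, G.card ≤ M ∧ t = ∑ i ∈ G, |a i|} :=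
  ⟨_, by rintro _ ⟨G, -, rfl⟩; exact a.sum_abs_le_sum_support_abs G⟩

theorem sum_abs_le_ell1G {M : ℕ} (a : ℕ →₀ ℝ) {G : Finset ℕ} (hG : #G ≤ M) :
    ∑ i ∈ G, |a i| ≤ ell1G M a :=
  le_csSup (bddAbove_ell1G_set M a) ⟨G, hG, rfl⟩

theorem ell1G_le {M : ℕ} {a : ℕ →₀ ℝ} {B : ℝ} (h : ∀ G : Finset ℕ, #G ≤ M → ∑ i ∈ G, |a i| ≤ B) :
    ell1G M a ≤ B :=
  csSup_le ⟨0, ∅, by simp⟩ (by rintro _ ⟨G, hG, rfl⟩; exact h G hG)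

theorem ell1G_nonneg (M : ℕ) (a : ℕ →₀ ℝ) : 0 ≤ ell1G M a := by
  simpa using sum_abs_le_ell1G a (G := ∅) (Nat.zero_le M)

theorem ell1G_le_sum_abs (M : ℕ) (a : ℕ →₀ ℝ) : ell1G M a ≤ ∑ i ∈ a.support, |a i| :=
  ell1G_le fun G _ => a.sum_abs_le_sum_support_abs G

theorem ell1G_mono (a : ℕ →₀ ℝ) : Monotone fun M => ell1G M a := fun _ _ hMM' =>
  ell1G_le fun _ hG => sum_abs_le_ell1G a (hG.trans hMM')

theorem ell1G_mul_le (a : ℕ →₀ ℝ) (M k : ℕ) : ell1G (k * M) a ≤ k * ell1G M a := by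
  refine ell1G_le fun G hG => ?_
  induction k generalizing G with
  | zero => simp [card_eq_zero.1 (by simpa using hG)]
  | succ k ih =>
    obtain ⟨G₁, hG₁, hcard⟩ := exists_subset_card_eq (min_le_left #G M)
    rw [← sum_sdiff hG₁, Nat.cast_succ, add_one_mul]
    refine add_le_add (ih _ ?_) (sum_abs_le_ell1G a (hcard ▸ min_le_right _ _))
    rw [card_sdiff_of_subset hG₁, hcard]
    rw [Nat.succ_mul] at hG
    omega

theorem bddAbove_mul_ell1G (M : ℕ → ℕ) (a : ℕ →₀ ℝ) {c : ℕ → ℝ} {C : ℝ}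
    (hc : ∀ n, 1 ≤ n → |c n| ≤ C) : BddAbove {r | ∃ n : ℕ, 1 ≤ n ∧ r = c n * ell1G (M n) a} := by
  refine ⟨C * ∑ i ∈ a.support, |a i|, ?_⟩
  rintro _ ⟨n, hn, rfl⟩
  calc c n * ell1G (M n) a ≤ |c n| * ell1G (M n) a :=
        mul_le_mul_of_nonneg_right (le_abs_self _) (ell1G_nonneg _ _)
    _ ≤ _ := mul_le_mul (hc n hn) (ell1G_le_sum_abs _ _) (ell1G_nonneg _ _)
        ((abs_nonneg _).trans (hc n hn))

/-- `ell1G M a / M` is the average of the `M` largest `|a i|`. -/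
def largeCoeffs (M : ℕ) (a : ℕ →₀ ℝ) : Finset ℕ :=
  {i ∈ a.support | ell1G M a / M < |a i|}

theorem card_largeCoeffs_le {M : ℕ} (hM : 0 < M) (a : ℕ →₀ ℝ) : #(largeCoeffs M a) ≤ M := by
  by_contra! hlt
  obtain ⟨G, hG, hcard⟩ := exists_subset_card_eq hlt.le
  have hlarge := sum_lt_sum_of_nonempty (card_pos.1 (hcard ▸ hM)) fun i hi =>
    (mem_filter.1 (hG hi)).2
  rw [sum_const, hcard, nsmul_eq_mul, mul_div_cancel₀ _ (by positivity)] at hlarge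
  exact (sum_abs_le_ell1G a hcard.le).not_gt hlarge

theorem sum_abs_largeCoeffs_le {M : ℕ} (hM : 0 < M) (a : ℕ →₀ ℝ) :
    ∑ i ∈ largeCoeffs M a, |a i| ≤ ell1G M a :=
  sum_abs_le_ell1G a (card_largeCoeffs_le hM a)

theorem largeCoeffs_one (a : ℕ →₀ ℝ) : largeCoeffs 1 a = ∅ :=
  filter_false_of_mem fun i _ => by
    simpa using sum_abs_le_ell1G a (M := 1) (G := {i}) (by simp)

theorem largeCoeffs_subset_of_dvd {M M' : ℕ} (hM : 0 < M) (hM' : 0 < M') (hd : M ∣ M')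
    (a : ℕ →₀ ℝ) : largeCoeffs M a ⊆ largeCoeffs M' a := by
  obtain ⟨q, rfl⟩ := hd
  have hq : 0 < q := Nat.pos_of_mul_pos_left hM'
  intro i hi
  simp only [largeCoeffs, mem_filter] at hi ⊢
  refine ⟨hi.1, lt_of_le_of_lt ?_ hi.2⟩
  calc ell1G (M * q) a / ↑(M * q) ≤ q * ell1G M a / ↑(M * q) := by
        gcongr
        rw [mul_comm]
        exact ell1G_mul_le a M q
    _ = ell1G M a / M := by push_cast; field_simp

theorem eventually_largeCoeffs_eq_support (a : ℕ →₀ ℝ) :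
    ∀ᶠ M in atTop, largeCoeffs M a = a.support := by
  have hlim : Tendsto (fun M : ℕ => (∑ i ∈ a.support, |a i|) / M) atTop (𝓝 0) :=
    tendsto_const_div_atTop_nhds_zero_nat _
  filter_upwards [(eventually_all_finset a.support).2 fun i hi =>
    hlim.eventually (gt_mem_nhds (abs_pos.2 (Finsupp.mem_support_iff.1 hi)))] with M hM
  exact filter_true_of_mem fun i hi => lt_of_le_of_lt
    (div_le_div_of_nonneg_right (ell1G_le_sum_abs M a) (Nat.cast_nonneg _)) (hM i hi)

theorem exists_strictMono_dvd_ge (need : ℕ → ℕ) :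
    ∃ M : ℕ → ℕ, M 0 = 1 ∧ StrictMono M ∧ (∀ j, M j ∣ M (j + 1)) ∧ ∀ j, need j ≤ M (j + 1) := by
  set q : ℕ → ℕ := fun j => max 2 (need j)
  have hpos : ∀ j, 0 < ∏ i ∈ range j, q i := fun j => prod_pos fun i _ => by positivity
  refine ⟨fun j => ∏ i ∈ range j, q i, by simp, strictMono_nat_of_lt_succ fun j => ?_,
    fun j => ?_, fun j => ?_⟩ <;> simp only [prod_range_succ]
  · have := hpos j
    have : 2 ≤ q j := le_max_left _ _
    nlinarith
  · exact dvd_mul_right _ _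
  · exact (le_max_right 2 (need j)).trans (Nat.le_mul_of_pos_left _ (hpos j))

section SpreadingModel

variable {X Y : Type*} [NormedAddCommGroup X] [NormedSpace ℝ X]
  [NormedAddCommGroup Y] [NormedSpace ℝ Y]

def IsSpreadingModelWith (x : ℕ → X) (xt : ℕ → Y) (ε : ℕ → ℝ) : Prop :=
  ∀ (n : ℕ) (a : Fin n → ℝ), (∀ i, |a i| ≤ 1) →
    ∀ k : Fin n → ℕ, StrictMono k → (∀ i, n ≤ k i) →
      |‖∑ i, a i • x (k i)‖ - ‖∑ i, a i • xt (i : ℕ)‖| < ε n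

namespace IsSpreadingModelWith

variable {x : ℕ → X} {xt : ℕ → Y} {ε : ℕ → ℝ}

theorem abs_norm_sub_lt (h : IsSpreadingModelWith x xt ε) {m N : ℕ} (hmN : m ≤ N) {b : ℕ → ℝ}
    (hb : ∀ i < m, |b i| ≤ 1) {k : ℕ → ℕ} (hk : StrictMonoOn k (Set.Iio m))
    (hkN : ∀ i < m, N ≤ k i) :
    |‖∑ i ∈ range m, b i • x (k i)‖ - ‖∑ i ∈ range m, b i • xt i‖| < ε N := by
  -- pad with zero coefficients placed beyond every `k i`
  set K := N + ∑ i ∈ range m, k i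
  have hkK : ∀ i < m, k i ≤ K := fun i hi =>
    (single_le_sum (fun _ _ => Nat.zero_le _) (mem_range.2 hi)).trans (Nat.le_add_left _ _)
  let kN : Fin N → ℕ := fun j => if (j : ℕ) < m then k j else K + j
  let aN : Fin N → ℝ := fun j => if (j : ℕ) < m then b j else 0
  have hkN_mono : StrictMono kN := by
    intro i j hij
    rw [Fin.lt_def] at hij
    simp only [kN]
    split_ifs with hi hj hj
    · exact hk hi hj hij
    · linarith [hkK i hi]
    · omega
    · omega
  have key := h N aN (fun j => by simp only [aN]; split_ifs with hj; exacts [hb j hj, by simp])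
    kN hkN_mono (fun j => by simp only [kN]; split_ifs with hj; exacts [hkN j hj, by omega])
  have hsumx : ∑ j, aN j • x (kN j) = ∑ i ∈ range m, b i • x (k i) := by
    rw [← sum_range_ite_lt hmN, ← Fin.sum_univ_eq_sum_range]
    exact sum_congr rfl fun j _ => by simp only [aN, kN]; split_ifs <;> simp
  have hsumxt : ∑ j : Fin N, aN j • xt j = ∑ i ∈ range m, b i • xt i := by
    rw [← sum_range_ite_lt hmN, ← Fin.sum_univ_eq_sum_range]
    exact sum_congr rfl fun j _ => by simp only [aN]; split_ifs <;> simp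
  rwa [hsumx, hsumxt] at key

theorem abs_norm_sub_le (h : IsSpreadingModelWith x xt ε) {m N : ℕ} (hmN : m ≤ N) {s : ℝ}
    (hs : 0 < s) {b : ℕ → ℝ} (hb : ∀ i < m, |b i| ≤ s) {k : ℕ → ℕ}
    (hk : StrictMonoOn k (Set.Iio m)) (hkN : ∀ i < m, N ≤ k i) :
    |‖∑ i ∈ range m, b i • x (k i)‖ - ‖∑ i ∈ range m, b i • xt i‖| ≤ s * ε N := by
  have hb' : ∀ i < m, |b i / s| ≤ 1 := fun i hi => by
    rw [abs_div, abs_of_pos hs, div_le_one hs]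
    exact hb i hi
  rw [sum_smul_eq_smul_sum_div _ hs.ne', sum_smul_eq_smul_sum_div _ hs.ne' b, norm_smul,
    norm_smul, ← mul_sub, abs_mul, Real.norm_eq_abs, abs_abs, abs_of_pos hs]
  exact mul_le_mul_of_nonneg_left (h.abs_norm_sub_lt hmN hb' hk hkN).le hs.le

/-- Moving the `j`-th vector through the terms of a convex combination of far-out `x t` of small
norm (Mazur) shows that the spreading model is suppression `1`-unconditional. -/
theorem norm_sum_update_zero_le_add (h : IsSpreadingModelWith x xt ε) (hx : IsWeaklyNull x)
    (b : ℕ → ℝ) {m j : ℕ} (hjm : j < m) {s : ℝ} (hs : 0 < s)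
    (hbs : ∀ i < m, |b i| ≤ s) {N : ℕ} (hN : m ≤ N) {γ : ℝ} (hγ : 0 < γ) :
    ‖∑ i ∈ range m, Function.update b j 0 i • xt i‖
      ≤ ‖∑ i ∈ range m, b i • xt i‖ + γ + 2 * s * ε N := by
  obtain ⟨J', y, hy, hyγ⟩ := hx.exists_mem_convexHull_Icc_norm_le (N + j) (div_pos hγ hs)
  set k : ℕ → ℕ := fun i => if i < j then N + i else N + J' + i
  set V := ∑ i ∈ range m, Function.update b j 0 i • x (k i)
  have hkt : ∀ t ∈ Set.Icc (N + j) J', StrictMonoOn (Function.update k j t) (Set.Iio m) ∧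
      ∀ i < m, N ≤ Function.update k j t i := fun t ht => by
    rw [Set.mem_Icc] at ht
    refine ⟨fun a _ b _ hab => ?_, fun i _ => ?_⟩ <;> simp only [Function.update_apply, k] <;>
      split_ifs <;> omega
  have hsplit : ∀ t, ∑ i ∈ range m, b i • x (Function.update k j t i) = V + b j • x t := by
    intro t
    simp only [V]
    rw [← add_sum_erase _ _ (mem_range.2 hjm), ← add_sum_erase (range m) _ (mem_range.2 hjm)]
    simp only [Function.update_self, zero_smul, zero_add]
    rw [add_comm]
    congr 1
    exact sum_congr rfl fun i hi => by
      rw [Function.update_of_ne (ne_of_mem_erase hi), Function.update_of_ne (ne_of_mem_erase hi)]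
  have hR : ∀ z ∈ x '' Set.Icc (N + j) J',
      ‖V + b j • z‖ ≤ ‖∑ i ∈ range m, b i • xt i‖ + s * ε N := by
    rintro _ ⟨t, ht, rfl⟩
    rw [← hsplit]
    linarith [(abs_le.1 (h.abs_norm_sub_le hN hs hbs (hkt t ht).1 (hkt t ht).2)).2]
  obtain ⟨z, hz, hyz⟩ :=
    (convexOn_norm_add_smul V (b j)).exists_ge_of_mem_convexHull (Set.subset_univ _) hy
  have hV : ‖V‖ ≤ ‖V + b j • y‖ + γ :=
    calc ‖V‖ ≤ ‖V + b j • y‖ + ‖b j • y‖ := by simpa using norm_sub_le (V + b j • y) (b j • y)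
      _ ≤ ‖V + b j • y‖ + s * (γ / s) := by
        rw [norm_smul, Real.norm_eq_abs]
        gcongr
        exact hbs j hjm
      _ = ‖V + b j • y‖ + γ := by field_simp
  have hbs' : ∀ i < m, |Function.update b j 0 i| ≤ s := fun i hi => by
    rcases eq_or_ne i j with rfl | hij
    · simpa using hs.le
    · rw [Function.update_of_ne hij]; exact hbs i hi
  have hupd : |‖V‖ - _| ≤ _ := h.abs_norm_sub_le hN hs hbs'
    (fun a _ b _ hab => by simp only [k]; split_ifs <;> omega)
    fun i _ => by simp only [k]; split_ifs <;> omega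
  linarith [(abs_le.1 hupd).1, hR z hz]

variable (h : IsSpreadingModelWith x xt ε) (hε : Tendsto ε atTop (𝓝 0))
include h hε

theorem norm_sum_comp_eq (b : ℕ → ℝ) {m : ℕ} {ι : ℕ → ℕ} (hι : StrictMonoOn ι (Set.Iio m)) :
    ‖∑ i ∈ range m, b i • xt (ι i)‖ = ‖∑ i ∈ range m, b i • xt i‖ := by
  set s := 1 + ∑ i ∈ range m, |b i|
  have hs : 0 < s := by positivity
  have hbs : ∀ t ⊆ range m, |∑ i ∈ t, b i| ≤ s := fun t ht =>
    (abs_sum_le_sum_abs _ _).trans ((sum_le_sum_of_subset_of_nonneg ht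
      fun _ _ _ => abs_nonneg _).trans (le_add_of_nonneg_left zero_le_one))
  set m' := ∑ i ∈ range m, ι i + 1
  have hιm' : ∀ i < m, ι i < m' := fun i hi =>
    Nat.lt_succ_of_le (single_le_sum (fun _ _ => Nat.zero_le _) (mem_range.2 hi))
  -- compare both sides with `∑ b i • x (N + ι i)`, the left one after pushing `b` forward along `ι`
  refine eq_of_eventually_abs_sub_le_mul hε (C := 2 * s) ?_
  filter_upwards [eventually_ge_atTop (m + m')] with N hN
  have h1 := h.abs_norm_sub_le (m := m') (N := N) (by omega) hs
    (b := fun j => ∑ i ∈ range m with ι i = j, b i) (fun j _ => hbs _ (filter_subset _ _))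
    (k := (N + ·)) (fun i _ j _ hij => by simpa using hij) (fun i _ => by omega)
  have h2 := h.abs_norm_sub_le (m := m) (N := N) (by omega) hs (b := b)
    (fun i hi => by simpa using hbs {i} (by simpa using hi)) (k := fun i => N + ι i)
    (fun i hi j hj hij => by simpa using hι hi hj hij) (fun i _ => by omega)
  rw [sum_range_fiberwise_smul hιm', sum_range_fiberwise_smul hιm' b xt] at h1
  have h1 := abs_le.1 h1
  have h2 := abs_le.1 h2
  exact abs_le.2 ⟨by linarith, by linarith⟩

theorem norm_eq_one (hnorm : IsNormalizedSeq x) (i : ℕ) : ‖xt i‖ = 1 := by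
  have hshift := h.norm_sum_comp_eq hε (fun _ => 1) (m := 1) (ι := fun _ => i)
    fun a ha b hb hab => by simp only [Set.mem_Iio] at ha hb; omega
  simp only [range_one, sum_singleton, one_smul] at hshift
  rw [hshift]
  refine (eq_of_eventually_abs_sub_le_mul hε (C := 1) ?_).symm
  filter_upwards [eventually_ge_atTop 1] with N hN
  simpa [hnorm N] using h.abs_norm_sub_le hN one_pos (b := fun _ => 1) (by simp)
    (k := fun _ => N) (fun a ha b hb hab => by simp only [Set.mem_Iio] at ha hb; omega) (by simp)

theorem norm_sum_range_add_le (m n : ℕ) :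
    ‖∑ i ∈ range (m + n), xt i‖ ≤ ‖∑ i ∈ range m, xt i‖ + ‖∑ i ∈ range n, xt i‖ := by
  have hshift := h.norm_sum_comp_eq hε (fun _ => 1) (m := n) (ι := (m + ·))
    fun i _ j _ hij => by simpa using hij
  simp only [one_smul] at hshift
  rw [sum_range_add, ← hshift]
  exact norm_add_le _ _

theorem norm_sum_range_mul_le (k n : ℕ) :
    ‖∑ i ∈ range (k * n), xt i‖ ≤ k * ‖∑ i ∈ range n, xt i‖ := by
  induction k with
  | zero => simp
  | succ k ih =>
    rw [Nat.succ_mul, Nat.cast_succ, add_one_mul]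
    exact (h.norm_sum_range_add_le hε _ _).trans (by linarith)

/-- A functional norming a long sum `x̃₀ + ⋯ + x̃_{N-1}` is on average `≥ δ` on its terms. -/
theorem exists_dual_ge_on_card_ge (hnorm : IsNormalizedSeq x) {δ : ℝ} (hδ : 0 < δ)
    (hlow : ∀ N : ℕ, δ * N ≤ ‖∑ i ∈ range N, xt i‖) (n : ℕ) :
    ∃ g : Y →L[ℝ] ℝ, ‖g‖ ≤ 1 ∧ ∃ A : Finset ℕ, n ≤ #A ∧ ∀ i ∈ A, δ / 2 ≤ g (xt i) := by
  obtain ⟨N, hN⟩ := exists_nat_ge (2 * n / δ)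
  obtain ⟨g, hg, hgv⟩ := exists_dual_vector'' ℝ (∑ i ∈ range N, xt i)
  refine ⟨g, hg, {i ∈ range N | δ / 2 ≤ g (xt i)}, ?_, fun i hi => (mem_filter.1 hi).2⟩
  have hg1 : ∀ i, g (xt i) ≤ 1 := fun i => (le_abs_self _).trans
    ((g.le_opNorm _).trans (by rw [h.norm_eq_one hε hnorm, mul_one]; exact hg))
  have hcount : δ * N ≤ #{i ∈ range N | δ / 2 ≤ g (xt i)} + N * (δ / 2) := by
    calc δ * N ≤ ∑ i ∈ range N, g (xt i) := by
          rw [← map_sum, hgv]; exact hlow N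
      _ = ∑ i ∈ range N with δ / 2 ≤ g (xt i), g (xt i)
          + ∑ i ∈ range N with ¬ δ / 2 ≤ g (xt i), g (xt i) :=
          (sum_filter_add_sum_filter_not _ _ _).symm
      _ ≤ #{i ∈ range N | δ / 2 ≤ g (xt i)} * 1
          + #{i ∈ range N | ¬ δ / 2 ≤ g (xt i)} * (δ / 2) := by
          gcongr
          · exact sum_le_card_nsmul _ _ _ (fun i _ => hg1 i) |>.trans_eq (nsmul_eq_mul _ _)
          · exact sum_le_card_nsmul _ _ _ (fun i hi => (not_le.1 (mem_filter.1 hi).2).le)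
              |>.trans_eq (nsmul_eq_mul _ _)
      _ ≤ _ := by
          rw [mul_one]
          gcongr
          exact_mod_cast (card_filter_le _ _).trans (card_range N).le
  rw [div_le_iff₀ hδ] at hN
  exact_mod_cast (by nlinarith : (n : ℝ) ≤ #{i ∈ range N | δ / 2 ≤ g (xt i)})

variable (hx : IsWeaklyNull x)
include hx

theorem norm_sum_update_zero_le (b : ℕ → ℝ) (m j : ℕ) :
    ‖∑ i ∈ range m, Function.update b j 0 i • xt i‖ ≤ ‖∑ i ∈ range m, b i • xt i‖ := by
  rcases le_or_gt m j with hjm | hjm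
  · refine (congrArg _ (sum_congr rfl fun i hi => ?_)).le
    rw [Function.update_of_ne (by simp at hi; omega)]
  set s := 1 + ∑ i ∈ range m, |b i|
  have hs : 0 < s := by positivity
  have hbs : ∀ i < m, |b i| ≤ s := fun i hi =>
    (single_le_sum (fun i _ => abs_nonneg (b i)) (mem_range.2 hi)).trans
      (le_add_of_nonneg_left zero_le_one)
  refine le_of_forall_pos_le_add fun γ hγ => le_of_eventually_le_add_mul hε (C := 2 * s) ?_
  filter_upwards [eventually_ge_atTop m] with N hN
  linarith [h.norm_sum_update_zero_le_add hx b hjm hs hbs hN hγ]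

theorem norm_sum_update_mul_le (b : ℕ → ℝ) (m j : ℕ) {r : ℝ} (hr : r ∈ Set.Icc (0 : ℝ) 1) :
    ‖∑ i ∈ range m, Function.update b j (r * b j) i • xt i‖ ≤ ‖∑ i ∈ range m, b i • xt i‖ := by
  have hdecomp : ∑ i ∈ range m, Function.update b j (r * b j) i • xt i =
      r • ∑ i ∈ range m, b i • xt i + (1 - r) • ∑ i ∈ range m, Function.update b j 0 i • xt i := by
    simp only [smul_sum, ← sum_add_distrib, smul_smul, ← add_smul]
    refine sum_congr rfl fun i _ => ?_
    rcases eq_or_ne i j with rfl | hij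
    · simp
    · simp only [Function.update_of_ne hij]; ring_nf
  rw [hdecomp]
  calc _ ≤ r * ‖∑ i ∈ range m, b i • xt i‖
        + (1 - r) * ‖∑ i ∈ range m, Function.update b j 0 i • xt i‖ := by
        refine (norm_add_le _ _).trans_eq ?_
        rw [norm_smul, norm_smul, Real.norm_of_nonneg hr.1,
          Real.norm_of_nonneg (by linarith [hr.2])]
    _ ≤ r * ‖∑ i ∈ range m, b i • xt i‖ + (1 - r) * ‖∑ i ∈ range m, b i • xt i‖ := by
        gcongr
        · linarith [hr.2]
        · exact h.norm_sum_update_zero_le hε hx b m j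
    _ = _ := by ring

theorem norm_sum_mul_le (b : ℕ → ℝ) {m : ℕ} {t : ℕ → ℝ} (ht : ∀ i < m, t i ∈ Set.Icc (0 : ℝ) 1) :
    ‖∑ i ∈ range m, (t i * b i) • xt i‖ ≤ ‖∑ i ∈ range m, b i • xt i‖ := by
  -- shrink one coordinate at a time, by induction on the coordinates where `t ≠ 1`
  suffices key : ∀ (s : Finset ℕ) (t : ℕ → ℝ), (∀ i ∈ s, t i ∈ Set.Icc (0 : ℝ) 1) →
      (∀ i ∉ s, t i = 1) → ‖∑ i ∈ range m, (t i * b i) • xt i‖ ≤ ‖∑ i ∈ range m, b i • xt i‖ by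
    calc _ = ‖∑ i ∈ range m, ((if i < m then t i else 1) * b i) • xt i‖ := by
          congr 1
          exact sum_congr rfl fun i hi => by simp [mem_range.1 hi]
      _ ≤ _ := key (range m) _ (fun i hi => by simpa [mem_range.1 hi] using ht i (mem_range.1 hi))
          fun i hi => if_neg (by simpa using hi)
  intro s
  induction s using Finset.induction_on with
  | empty => intro t _ ht1; simp [ht1]
  | insert j s hj ih =>
    intro t ht ht1
    have heq : (fun i => t i * b i) = Function.update (fun i => Function.update t j 1 i * b i) j
        (t j * (Function.update t j 1 j * b j)) := by
      ext i
      rcases eq_or_ne i j with rfl | hij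
      · simp
      · simp [hij]
    calc _ = ‖∑ i ∈ range m, Function.update (fun i => Function.update t j 1 i * b i) j
          (t j * (Function.update t j 1 j * b j)) i • xt i‖ := by
          rw [← heq]
      _ ≤ ‖∑ i ∈ range m, (Function.update t j 1 i * b i) • xt i‖ :=
          h.norm_sum_update_mul_le hε hx _ m j (ht j (mem_insert_self j s))
      _ ≤ _ := ih _ (fun i hi => by
            rw [Function.update_of_ne (ne_of_mem_of_not_mem hi hj)]
            exact ht i (mem_insert_of_mem hi))
          (fun i hi => by
            rcases eq_or_ne i j with rfl | hij
            · simp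
            · rw [Function.update_of_ne hij]; exact ht1 i (by simp [hij, hi]))

theorem norm_sum_le_two_mul_of_abs_eq {b b' : ℕ → ℝ} {m : ℕ} (hbb' : ∀ i < m, |b' i| = |b i|) :
    ‖∑ i ∈ range m, b' i • xt i‖ ≤ 2 * ‖∑ i ∈ range m, b i • xt i‖ := by
  set p : ℕ → ℝ := fun i => if b' i = b i then 1 else 0
  have hp : ∀ i < m, p i ∈ Set.Icc (0 : ℝ) 1 := fun i _ => by simp only [p]; split_ifs <;> simp
  have hp' : ∀ i < m, 1 - p i ∈ Set.Icc (0 : ℝ) 1 := fun i _ => by simp only [p]; split_ifs <;> simp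
  have hsplit : ∑ i ∈ range m, b' i • xt i =
      ∑ i ∈ range m, (p i * b i) • xt i - ∑ i ∈ range m, ((1 - p i) * b i) • xt i := by
    rw [← sum_sub_distrib]
    refine sum_congr rfl fun i hi => ?_
    rw [← sub_smul]
    congr 1
    by_cases hbi : b' i = b i
    · simp [p, hbi]
    · have hb : b' i = -b i := (abs_eq_abs.1 (hbb' i (mem_range.1 hi))).resolve_left hbi
      simp only [p, if_neg hbi, hb]
      ring
  rw [hsplit, two_mul]
  exact (norm_sub_le _ _).trans
    (add_le_add (h.norm_sum_mul_le hε hx b hp) (h.norm_sum_mul_le hε hx b hp'))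

theorem norm_sum_le_two_mul_norm_sum {b : ℕ → ℝ} {m : ℕ} {t : ℝ} (ht : 0 < t)
    (hb : ∀ i < m, |b i| ≤ t) :
    ‖∑ i ∈ range m, b i • xt i‖ ≤ 2 * t * ‖∑ i ∈ range m, xt i‖ := by
  have habs := h.norm_sum_le_two_mul_of_abs_eq hε hx (b := fun i => |b i|) (b' := b) (m := m)
    fun i _ => (abs_abs _).symm
  have hmono := h.norm_sum_mul_le hε hx (fun _ => t) (t := fun i => |b i| / t) fun i hi =>
    ⟨by positivity, (div_le_one ht).2 (hb i hi)⟩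
  simp only [div_mul_cancel₀ _ ht.ne'] at hmono
  rw [← smul_sum, norm_smul, Real.norm_of_nonneg ht.le] at hmono
  nlinarith

theorem norm_sum_range_mono {m n : ℕ} (hmn : m ≤ n) :
    ‖∑ i ∈ range m, xt i‖ ≤ ‖∑ i ∈ range n, xt i‖ := by
  have := h.norm_sum_mul_le hε hx (fun _ => 1) (m := n) (t := fun i => if i < m then 1 else 0)
    fun i _ => by split_ifs <;> simp
  simpa [ite_smul, sum_range_ite_lt hmn] using this

theorem norm_sum_le_of_card_le {N : ℕ} {P : Finset ℕ} (hP : #P ≤ N) {κ : ℕ → ℕ}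
    (hκ : StrictMono κ) (hκN : ∀ i ∈ P, N ≤ κ i) {c : ℕ → ℝ} {t : ℝ} (ht : 0 < t)
    (hc : ∀ i ∈ P, |c i| ≤ t) :
    ‖∑ i ∈ P, c i • x (κ i)‖ ≤ t * (2 * ‖∑ i ∈ range N, xt i‖ + ε N) := by
  obtain ⟨e, he, hbij⟩ := P.exists_strictMonoOn_bijOn_Iio_card
  have heP : ∀ r < #P, e r ∈ P := fun r hr => hbij.mapsTo hr
  have hsum : ∑ i ∈ P, c i • x (κ i) = ∑ r ∈ range #P, c (e r) • x (κ (e r)) :=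
    (sum_nbij e (fun r hr => heP r (mem_range.1 hr)) (by simpa using hbij.injOn)
      (by simpa using hbij.surjOn) fun _ _ => rfl).symm
  have happrox := h.abs_norm_sub_le hP ht (b := c ∘ e) (fun r hr => hc _ (heP r hr))
    (k := κ ∘ e) (fun r hr s hs hrs => hκ (he hr hs hrs)) fun r hr => hκN _ (heP r hr)
  have hxt := h.norm_sum_le_two_mul_norm_sum hε hx ht (b := c ∘ e) fun r hr => hc _ (heP r hr)
  have hmono := h.norm_sum_range_mono hε hx hP
  rw [hsum]
  simp only [Function.comp_apply] at happrox hxt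
  nlinarith [(abs_le.1 happrox).2]

section

variable (hnorm : IsNormalizedSeq x)
include hnorm

theorem mul_sum_abs_le_of_forall_mul_le {δ : ℝ} (hδ : 0 < δ)
    (hlow : ∀ N : ℕ, δ * N ≤ ‖∑ i ∈ range N, xt i‖) (b : ℕ → ℝ) (n : ℕ) :
    δ * ∑ i ∈ range n, |b i| ≤ 4 * ‖∑ i ∈ range n, b i • xt i‖ := by
  obtain ⟨g, hg, A, hA, hgA⟩ := h.exists_dual_ge_on_card_ge hε hnorm hδ hlow n
  obtain ⟨e, he, hbij⟩ := A.exists_strictMonoOn_bijOn_Iio_card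
  have heA : ∀ r < n, e r ∈ A := fun r hr => hbij.mapsTo (show r < #A by omega)
  have hen : StrictMonoOn e (Set.Iio n) := he.mono fun r hr => lt_of_lt_of_le hr hA
  set u := ∑ r ∈ range n, |b r| • xt (e r)
  calc δ * ∑ i ∈ range n, |b i| = 2 * ∑ r ∈ range n, |b r| * (δ / 2) := by
        rw [mul_sum, mul_sum]; exact sum_congr rfl fun r _ => by ring
    _ ≤ 2 * g u := by
        rw [map_sum]
        gcongr with r hr
        rw [map_smul, smul_eq_mul]
        exact mul_le_mul_of_nonneg_left (hgA _ (heA r (mem_range.1 hr))) (abs_nonneg _)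
    _ ≤ 2 * ‖u‖ := by
        gcongr
        exact (le_abs_self _).trans
          ((g.le_opNorm u).trans (mul_le_of_le_one_left (norm_nonneg _) hg))
    _ = 2 * ‖∑ i ∈ range n, |b i| • xt i‖ := by rw [h.norm_sum_comp_eq hε _ hen]
    _ ≤ 2 * (2 * ‖∑ i ∈ range n, b i • xt i‖) := by
        gcongr
        exact h.norm_sum_le_two_mul_of_abs_eq hε hx fun i _ => abs_abs _
    _ = _ := by ring

theorem equivToLpBasis_one_of_forall_mul_le {δ : ℝ} (hδ : 0 < δ)
    (hlow : ∀ N : ℕ, δ * N ≤ ‖∑ i ∈ range N, xt i‖) : EquivToLpBasis 1 xt := by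
  refine ⟨max 1 (4 / δ), le_max_left _ _, fun n a => ?_⟩
  set b : ℕ → ℝ := fun i => if hi : i < n then a ⟨i, hi⟩ else 0
  have hxt : ∑ i, a i • xt i = ∑ i ∈ range n, b i • xt i := by
    rw [← Fin.sum_univ_eq_sum_range]; simp [b]
  have habs : ∑ i, |a i| = ∑ i ∈ range n, |b i| := by
    rw [← Fin.sum_univ_eq_sum_range (fun i => |b i|)]; simp [b]
  rw [lpNormFin_one, hxt, habs]
  have hsum : 0 ≤ ∑ i ∈ range n, |b i| := sum_nonneg fun _ _ => abs_nonneg _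
  constructor
  · have := h.mul_sum_abs_le_of_forall_mul_le hε hx hnorm hδ hlow b n
    calc _ ≤ 4 / δ * ‖∑ i ∈ range n, b i • xt i‖ := by
          rw [div_mul_eq_mul_div, le_div_iff₀ hδ]; linarith
      _ ≤ _ := by gcongr; exact le_max_right _ _
  · calc _ ≤ ∑ i ∈ range n, |b i| := norm_sum_smul_le_sum_abs _ _ (h.norm_eq_one hε hnorm)
      _ ≤ _ := le_mul_of_one_le_left hsum (le_max_left _ _)

theorem frequently_norm_sum_le (hne : ¬ EquivToLpBasis 1 xt) {ρ : ℝ}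
    (hρ : 0 < ρ) : ∃ᶠ n in atTop, ‖∑ i ∈ range n, xt i‖ ≤ ρ * n := by
  obtain ⟨n₀, hn₀⟩ : ∃ n₀ : ℕ, ‖∑ i ∈ range n₀, xt i‖ < ρ * n₀ := by
    by_contra! H
    exact hne (h.equivToLpBasis_one_of_forall_mul_le hε hx hnorm hρ H)
  have hn₀pos : 0 < n₀ := Nat.pos_of_ne_zero fun h0 => by simp [h0] at hn₀
  refine frequently_atTop.2 fun N => ⟨N * n₀, Nat.le_mul_of_pos_right N hn₀pos, ?_⟩
  calc _ ≤ N * ‖∑ i ∈ range n₀, xt i‖ := h.norm_sum_range_mul_le hε N n₀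
    _ ≤ N * (ρ * n₀) := by gcongr
    _ = ρ * ↑(N * n₀) := by push_cast; ring

theorem exists_strictMono_forall_norm_sum_le (hne : ¬ EquivToLpBasis 1 xt)
    {ρ : ℕ → ℝ} (hρ : ∀ j, 0 < ρ j) :
    ∃ ν : ℕ → ℕ, StrictMono ν ∧
      ∀ j, ‖∑ i ∈ range (ν j), xt i‖ ≤ ρ j * ν j ∧ ε (ν j) ≤ ρ j * ν j :=
  extraction_forall_of_frequently fun j =>
    (h.frequently_norm_sum_le hε hx hnorm hne (hρ j)).and_eventually <|
      ((hε.eventually (ge_mem_nhds (hρ j))).and (eventually_ge_atTop 1)).mono fun n hn =>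
        hn.1.trans (le_mul_of_one_le_right (hρ j).le (by exact_mod_cast hn.2))

end

variable (hεa : Antitone ε)
include hεa

theorem norm_sum_le_of_card_mem_Icc {ν : ℕ} (hν : 0 < ν) {ρ : ℝ}
    (hfm : ‖∑ i ∈ range ν, xt i‖ ≤ ρ * ν) (hεν : ε ν ≤ ρ * ν) {κ : ℕ → ℕ} (hκ : StrictMono κ)
    {B : Finset ℕ} (hνB : ν ≤ #B) (hB2 : #B ≤ 2 * ν) (hB : ∀ i ∈ B, 2 * ν ≤ κ i) {c : ℕ → ℝ}
    {t : ℝ} (hc : ∀ i ∈ B, t / 2 < |c i| ∧ |c i| ≤ t) :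
    ‖∑ i ∈ B, c i • x (κ i)‖ ≤ 10 * ρ * ∑ i ∈ B, |c i| := by
  have hρ : 0 ≤ ρ := nonneg_of_mul_nonneg_left ((norm_nonneg _).trans hfm) (by exact_mod_cast hν)
  obtain ⟨i, hi⟩ := card_pos.1 (hν.trans_le hνB)
  have ht : 0 < t := by linarith [(hc i hi).1, (hc i hi).2]
  have h2ν : ‖∑ i ∈ range (2 * ν), xt i‖ ≤ 2 * (ρ * ν) :=
    (h.norm_sum_range_mul_le hε 2 ν).trans (by push_cast; linarith)
  have hε2ν : ε (2 * ν) ≤ ρ * ν := (hεa (by omega)).trans hεν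
  have hνB' : (ν : ℝ) ≤ #B := by exact_mod_cast hνB
  calc _ ≤ t * (2 * ‖∑ i ∈ range (2 * ν), xt i‖ + ε (2 * ν)) :=
        h.norm_sum_le_of_card_le hε hx hB2 hκ hB ht fun i hi => (hc i hi).2
    _ ≤ t * (2 * (2 * (ρ * ν)) + ρ * ν) := by gcongr
    _ ≤ 10 * ρ * (#B * (t / 2)) := by
        nlinarith [mul_le_mul_of_nonneg_left hνB' (mul_nonneg hρ ht.le)]
    _ ≤ _ := by
        gcongr
        simpa using card_nsmul_le_sum B _ _ fun i hi => (hc i hi).1.le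

variable (hnorm : IsNormalizedSeq x)
include hnorm

/-- Cut into blocks of `ν` to `2ν` terms: each has norm `≤ 5ρνt` and `ℓ₁` mass `≥ νt/2`. -/
theorem norm_sum_le_of_abs_mem_Ioc {ν : ℕ} (hν : 0 < ν) {ρ : ℝ}
    (hfm : ‖∑ i ∈ range ν, xt i‖ ≤ ρ * ν) (hεν : ε ν ≤ ρ * ν) {κ : ℕ → ℕ} (hκ : StrictMono κ)
    {L : Finset ℕ} (hL : ∀ i ∈ L, 2 * ν ≤ κ i) {c : ℕ → ℝ}
    {t : ℝ} (ht : 0 ≤ t) (hc : ∀ i ∈ L, t / 2 < |c i| ∧ |c i| ≤ t) :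
    ‖∑ i ∈ L, c i • x (κ i)‖ ≤ 10 * ρ * ∑ i ∈ L, |c i| + ν * t := by
  have hρ : 0 ≤ ρ := nonneg_of_mul_nonneg_left ((norm_nonneg _).trans hfm) (by exact_mod_cast hν)
  have hblock : ∀ B ⊆ L, ν ≤ #B → #B ≤ 2 * ν →
      ‖∑ i ∈ B, c i • x (κ i)‖ ≤ 10 * ρ * ∑ i ∈ B, |c i| := fun B hB hνB hB2 =>
    h.norm_sum_le_of_card_mem_Icc hε hx hεa hν hfm hεν hκ hνB hB2 (fun i hi => hL i (hB hi))
      fun i hi => hc i (hB hi)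
  -- peel off blocks of exactly `ν` vectors while at least `2ν` remain
  have hbig : ∀ n, ∀ B ⊆ L, #B = n → ν ≤ n →
      ‖∑ i ∈ B, c i • x (κ i)‖ ≤ 10 * ρ * ∑ i ∈ B, |c i| := by
    intro n
    induction n using Nat.strong_induction_on with
    | _ n ih =>
      intro B hB hBn hνn
      by_cases hn : n ≤ 2 * ν
      · exact hblock B hB (hBn ▸ hνn) (hBn ▸ hn)
      obtain ⟨B', hB'B, hB'⟩ := exists_subset_card_eq (s := B) (n := ν) (by omega)
      have hrest := ih (n - ν) (by omega) (B \ B') (sdiff_subset.trans hB)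
        (by rw [card_sdiff_of_subset hB'B]; omega) (by omega)
      have hfirst := hblock B' (hB'B.trans hB) hB'.ge (by omega)
      rw [← sum_sdiff hB'B, ← sum_sdiff hB'B (f := fun i => |c i|), mul_add]
      exact (norm_add_le _ _).trans (add_le_add hrest hfirst)
  have hsum : 0 ≤ 10 * ρ * ∑ i ∈ L, |c i| := by positivity
  by_cases hLν : ν ≤ #L
  · exact (hbig _ L le_rfl rfl hLν).trans (le_add_of_nonneg_right (by positivity))
  · calc _ ≤ ∑ i ∈ L, |c i| := norm_sum_smul_le_sum_abs _ _ fun i => hnorm (κ i)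
      _ ≤ #L * t := by simpa using sum_le_card_nsmul L _ _ fun i hi => (hc i hi).2
      _ ≤ ν * t := by gcongr; exact_mod_cast (not_le.1 hLν).le
      _ ≤ _ := le_add_of_nonneg_left hsum

/-- Dyadic decomposition of the coefficients into the ranges `(θ/2^(k+1), θ/2^k]`. -/
theorem norm_sum_le_of_abs_le {ν : ℕ} (hν : 0 < ν) {ρ : ℝ}
    (hfm : ‖∑ i ∈ range ν, xt i‖ ≤ ρ * ν) (hεν : ε ν ≤ ρ * ν) {κ : ℕ → ℕ} (hκ : StrictMono κ)
    {L : Finset ℕ} (hL : ∀ i ∈ L, 2 * ν ≤ κ i) {c : ℕ → ℝ} {θ : ℝ}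
    (hθ : 0 ≤ θ) (hc : ∀ i ∈ L, |c i| ≤ θ) :
    ‖∑ i ∈ L, c i • x (κ i)‖ ≤ 10 * ρ * ∑ i ∈ L, |c i| + 2 * ν * θ := by
  have hρ : 0 ≤ ρ := nonneg_of_mul_nonneg_left ((norm_nonneg _).trans hfm) (by exact_mod_cast hν)
  set D : ℕ → Finset ℕ := fun k => {i ∈ L | θ / 2 ^ k < |c i|}
  have hmemD : ∀ k i, i ∈ D k ↔ i ∈ L ∧ θ / 2 ^ k < |c i| := fun _ _ => mem_filter
  have hD : Monotone D := monotone_nat_of_le_succ fun k i hi => by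
    rw [hmemD] at hi ⊢
    refine ⟨hi.1, lt_of_le_of_lt ?_ hi.2⟩
    gcongr <;> norm_num
  have hD0 : D 0 = ∅ := filter_false_of_mem fun i hi => by simpa using hc i hi
  have hsmall : Tendsto (fun k : ℕ => θ / 2 ^ k) atTop (𝓝 0) :=
    tendsto_const_nhds.div_atTop (tendsto_pow_atTop_atTop_of_one_lt one_lt_two)
  obtain ⟨K, hK⟩ := ((eventually_all_finset L).2 fun i _ =>
    (eq_or_ne (c i) 0).elim (fun hci => Eventually.of_forall fun _ => Or.inl hci)
      fun hci => (hsmall.eventually (gt_mem_nhds (abs_pos.2 hci))).mono fun _ => Or.inr).exists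
  have hLK : ∑ i ∈ L, c i • x (κ i) = ∑ i ∈ D K, c i • x (κ i) :=
    (sum_filter_of_ne fun i hi hne => (hK i hi).resolve_left fun h0 => hne (by simp [h0])).symm
  have hlevels := norm_sum_le_of_monotone hD hD0 (fun i => c i • x (κ i))
    (fun i => 10 * ρ * |c i|) (fun k => ν * (θ / 2 ^ k)) (n := K) fun k _ => by
      rw [← mul_sum]
      refine h.norm_sum_le_of_abs_mem_Ioc hε hx hεa hnorm hν hfm hεν hκ
        (fun i hi => hL i (mem_filter.1 (mem_sdiff.1 hi).1).1) (by positivity) fun i hi => ?_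
      obtain ⟨hik1, hik⟩ := mem_sdiff.1 hi
      rw [hmemD] at hik1 hik
      refine ⟨?_, not_lt.1 fun hlt => hik ⟨hik1.1, hlt⟩⟩
      rw [div_div, ← pow_succ]
      exact hik1.2
  have hgeom : ∑ k ∈ range K, (ν : ℝ) * (θ / 2 ^ k) ≤ 2 * ν * θ := by
    calc _ = ν * θ * ∑ k ∈ range K, (1 / 2 : ℝ) ^ k := by
          rw [mul_sum]; exact sum_congr rfl fun k _ => by rw [one_div_pow]; ring
      _ ≤ ν * θ * 2 := by gcongr; exact sum_geometric_two_le K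
      _ = _ := by ring
  rw [hLK]
  refine hlevels.trans (add_le_add ?_ hgeom)
  rw [← mul_sum]
  exact mul_le_mul_of_nonneg_left
    (sum_le_sum_of_subset_of_nonneg (filter_subset _ _) fun _ _ _ => abs_nonneg _) (by positivity)

/-- Along the subsequence `x (2 ν i)`, only the fewer than `j` indices `i < j` escape the block
estimates at scale `ν j`. -/
theorem norm_sum_two_mul_le {ν : ℕ → ℕ} (hν : StrictMono ν) {j : ℕ} (hj : 0 < j) {ρ : ℝ}
    (hfm : ‖∑ i ∈ range (ν j), xt i‖ ≤ ρ * ν j) (hεν : ε (ν j) ≤ ρ * ν j) {L : Finset ℕ}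
    {c : ℕ → ℝ} {θ : ℝ} (hθ : 0 ≤ θ) (hc : ∀ i ∈ L, |c i| ≤ θ) :
    ‖∑ i ∈ L, c i • x (2 * ν i)‖ ≤ 10 * ρ * ∑ i ∈ L, |c i| + 3 * ν j * θ := by
  have hνj : j ≤ ν j := hν.id_le j
  have hρ : 0 ≤ ρ :=
    nonneg_of_mul_nonneg_left ((norm_nonneg _).trans hfm) (by exact_mod_cast hj.trans_le hνj)
  have hfar := h.norm_sum_le_of_abs_le hε hx hεa hnorm (hj.trans_le hνj) hfm hεν
    (κ := fun i => 2 * ν i) (fun a b hab => by have := hν hab; dsimp only; omega)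
    (L := {i ∈ L | j ≤ i})
    (fun i hi => by have := hν.monotone (mem_filter.1 hi).2; omega) hθ
    fun i hi => hc i (mem_filter.1 hi).1
  have hnear : ‖∑ i ∈ L with ¬ j ≤ i, c i • x (2 * ν i)‖ ≤ ν j * θ :=
    calc _ ≤ ∑ i ∈ L with ¬ j ≤ i, |c i| := norm_sum_smul_le_sum_abs _ _ fun i => hnorm _
      _ ≤ #{i ∈ L | ¬ j ≤ i} * θ := by
          simpa using sum_le_card_nsmul _ _ _ fun i hi => hc i (mem_filter.1 hi).1
      _ ≤ ν j * θ := by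
          gcongr
          have : #{i ∈ L | ¬ j ≤ i} ≤ j := (card_le_card fun i hi =>
            mem_range.2 (not_le.1 (mem_filter.1 hi).2)).trans (card_range j).le
          exact_mod_cast this.trans hνj
  have hsub : ∑ i ∈ L with j ≤ i, |c i| ≤ ∑ i ∈ L, |c i| :=
    sum_le_sum_of_subset_of_nonneg (filter_subset _ _) fun _ _ _ => abs_nonneg _
  rw [← sum_filter_add_sum_filter_not L (j ≤ ·)]
  calc _ ≤ _ := norm_add_le _ _
    _ ≤ 10 * ρ * ∑ i ∈ L with j ≤ i, |c i| + 2 * ν j * θ + ν j * θ := add_le_add hfar hnear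
    _ ≤ _ := by nlinarith

variable {ν : ℕ → ℕ} (hν : StrictMono ν)
include hν

theorem norm_sum_sdiff_largeCoeffs_le {j : ℕ} (hj : 0 < j) {w : ℝ}
    (hfm : ‖∑ i ∈ range (ν j), xt i‖ ≤ w / 20 * ν j) (hεν : ε (ν j) ≤ w / 20 * ν j)
    {M M' : ℕ} (hM : 0 < M) (hMM' : M ≤ M') (hbig : 6 * (ν j : ℝ) ≤ w * M) (a : ℕ →₀ ℝ) :
    ‖∑ i ∈ largeCoeffs M' a \ largeCoeffs M a, a i • x (2 * ν i)‖ ≤ w * ell1G M' a := by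
  have hMr : (0 : ℝ) < M := by exact_mod_cast hM
  have hw : 0 ≤ w := by nlinarith [(Nat.cast_nonneg (ν j) : (0 : ℝ) ≤ ν j)]
  have he' := ell1G_nonneg M' a
  have hc : ∀ i ∈ largeCoeffs M' a \ largeCoeffs M a, |a i| ≤ ell1G M a / M := fun i hi => by
    obtain ⟨hi1, hi2⟩ := mem_sdiff.1 hi
    exact not_lt.1 fun hlt => hi2 (mem_filter.2 ⟨(mem_filter.1 hi1).1, hlt⟩)
  have hmass : ∑ i ∈ largeCoeffs M' a \ largeCoeffs M a, |a i| ≤ ell1G M' a :=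
    (sum_le_sum_of_subset_of_nonneg sdiff_subset fun _ _ _ => abs_nonneg _).trans
      (sum_abs_largeCoeffs_le (hM.trans_le hMM') a)
  have hθ : ell1G M a / M ≤ ell1G M' a / M := by gcongr; exact ell1G_mono a hMM'
  have hsmall : 3 * (ν j : ℝ) * (ell1G M' a / M) ≤ w / 2 * ell1G M' a := by
    rw [mul_div_assoc', div_le_iff₀ hMr]
    nlinarith
  calc _ ≤ 10 * (w / 20) * ∑ i ∈ largeCoeffs M' a \ largeCoeffs M a, |a i|
        + 3 * ν j * (ell1G M a / M) :=
        h.norm_sum_two_mul_le hε hx hεa hnorm hν hj hfm hεν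
          (div_nonneg (ell1G_nonneg M a) (Nat.cast_nonneg M)) hc
    _ ≤ w / 2 * ell1G M' a + 3 * ν j * (ell1G M' a / M) := by gcongr; linarith
    _ ≤ w * ell1G M' a := by linarith

/-- Splitting `a` along the increasing sets `largeCoeffs (M j) a`, the `j`-th piece costs at most
`R / 2 ^ j`. -/
theorem norm_sum_support_le {M : ℕ → ℕ} (hM0 : M 0 = 1) (hM : StrictMono M)
    (hMdvd : ∀ j, M j ∣ M (j + 1)) {w : ℕ → ℝ}
    (hgood : ∀ j, 2 ≤ j → ‖∑ i ∈ range (ν j), xt i‖ ≤ w j / 20 * ν j ∧ ε (ν j) ≤ w j / 20 * ν j)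
    (hbig : ∀ j, 2 ≤ j → 6 * (ν j : ℝ) ≤ w j * M (j - 1)) (a : ℕ →₀ ℝ) {R : ℝ}
    (hR1 : ell1G (M 1) a ≤ R / 2) (hR : ∀ j, 2 ≤ j → w j * ell1G (M j) a ≤ R / 2 ^ j) :
    ‖∑ i ∈ a.support, a i • x (2 * ν i)‖ ≤ R := by
  have hMpos : ∀ j, 0 < M j := fun j => (hM0 ▸ one_pos).trans_le (hM.monotone (Nat.zero_le j))
  set D := fun j => largeCoeffs (M j) a
  have hD : Monotone D := monotone_nat_of_le_succ fun j =>
    largeCoeffs_subset_of_dvd (hMpos j) (hMpos _) (hMdvd j) a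
  have hD0 : D 0 = ∅ := by simp only [D, hM0, largeCoeffs_one]
  obtain ⟨n, hn⟩ := (hM.tendsto_atTop.eventually (eventually_largeCoeffs_eq_support a)).exists
  have hlevel : ∀ k < n, ‖∑ i ∈ D (k + 1) \ D k, a i • x (2 * ν i)‖ ≤
      ∑ i ∈ D (k + 1) \ D k, (0 : ℝ) + R / 2 ^ (k + 1) := by
    intro k _
    rw [sum_const_zero, zero_add]
    rcases Nat.eq_zero_or_pos k with rfl | hk
    · simp only [hD0, sdiff_empty, D, zero_add, pow_one]
      exact (norm_sum_smul_le_sum_abs _ _ fun i => hnorm _).trans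
        ((sum_abs_largeCoeffs_le (hMpos 1) a).trans hR1)
    · refine (h.norm_sum_sdiff_largeCoeffs_le hε hx hεa hnorm hν (j := k + 1) (by omega)
        (hgood _ (by omega)).1 (hgood _ (by omega)).2 (hMpos k) (hM.monotone k.le_succ)
        (by simpa using hbig (k + 1) (by omega)) a).trans (hR _ (by omega))
  have hR0 : 0 ≤ R := by linarith [ell1G_nonneg (M 1) a]
  calc _ = ‖∑ i ∈ D n, a i • x (2 * ν i)‖ := by rw [show D n = a.support from hn]
    _ ≤ ∑ i ∈ D n, (0 : ℝ) + ∑ k ∈ range n, R / 2 ^ (k + 1) :=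
        norm_sum_le_of_monotone hD hD0 _ _ _ hlevel
    _ = R / 2 * ∑ k ∈ range n, (1 / 2 : ℝ) ^ k := by
        rw [sum_const_zero, zero_add, mul_sum]
        exact sum_congr rfl fun k _ => by rw [one_div_pow, pow_succ]; field_simp
    _ ≤ R / 2 * 2 := by gcongr; exact sum_geometric_two_le n
    _ = R := by ring

end IsSpreadingModelWith

end SpreadingModel

theorem statement18_general {X Y : Type*} [NormedAddCommGroup X] [NormedSpace ℝ X]
    [NormedAddCommGroup Y] [NormedSpace ℝ Y]
    (x : ℕ → X) (hxnorm : IsNormalizedSeq x) (hxwn : IsWeaklyNull x)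
    (xt : ℕ → Y) (hsm : IsSpreadingModelOf x xt) (hne1 : ¬ EquivToLpBasis 1 xt)
    (δ : ℕ → ℝ) (hδ : ∀ n, 2 ≤ n → δ n ∈ Set.Ioo (0 : ℝ) 1) :
    ∃ φ : ℕ → ℕ, StrictMono φ ∧ ∃ M : ℕ → ℕ, StrictMono M ∧ ∃ δ₁ : ℝ, 0 < δ₁ ∧
      ∀ a : ℕ →₀ ℝ,
        ‖∑ i ∈ a.support, a i • x (φ i)‖ ≤
          sSup {r | ∃ n : ℕ, 1 ≤ n ∧
            r = (if n = 1 then δ₁ else δ n) * ell1G (M n) a} := by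
  obtain ⟨-, ε, -, hεa, hε, h : IsSpreadingModelWith x xt ε⟩ := hsm
  -- `max j 2` only serves to make `w` positive at the irrelevant indices `j < 2`
  set w : ℕ → ℝ := fun j => δ (max j 2) / 2 ^ j
  have hw : ∀ j, 0 < w j := fun j => div_pos (hδ _ (le_max_right _ _)).1 (by positivity)
  obtain ⟨ν, hν, hgood⟩ := h.exists_strictMono_forall_norm_sum_le hε hxwn hxnorm hne1
    (ρ := fun j => w j / 20) fun j => by linarith [hw j]
  obtain ⟨M, hM0, hM, hMdvd, hMbig⟩ :=
    exists_strictMono_dvd_ge fun j => ⌈6 * ν (j + 2) / w (j + 2)⌉₊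
  refine ⟨fun i => 2 * ν i, fun i j hij => by simpa using hν hij, M, hM, 2, two_pos, fun a => ?_⟩
  have hS := bddAbove_mul_ell1G M a (c := fun n => if n = 1 then 2 else δ n) (C := 2) fun n hn => by
    split_ifs
    · norm_num
    · have := hδ n (by omega)
      rw [abs_of_pos this.1]
      linarith [this.2]
  refine h.norm_sum_support_le hε hxwn hεa hxnorm hν hM0 hM hMdvd (fun j _ => hgood j)
    (fun j hj => ?_) a ?_ fun j hj => ?_
  · obtain ⟨j, rfl⟩ : ∃ i, j = i + 2 := ⟨j - 2, by omega⟩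
    have := (Nat.le_ceil _).trans (Nat.cast_le.2 (hMbig j))
    rw [div_le_iff₀ (hw _)] at this
    simpa [mul_comm] using this
  · have := le_csSup hS ⟨1, le_rfl, rfl⟩
    simp only [if_pos] at this
    linarith
  · have := le_csSup hS ⟨j, by omega, rfl⟩
    simp only [if_neg (show j ≠ 1 by omega)] at this
    simp only [w, max_eq_left hj, div_mul_eq_mul_div]
    exact div_le_div_of_nonneg_right this (by positivity)

/-- **Lemma 5.3.** Let `(x_i)` be a normalized weakly null basic sequence whose
spreading model is not equivalent to the unit vector basis of `ℓ₁`.  Then for every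
`(δ_n)_{n ≥ 2} ⊆ (0,1)` there are a subsequence `(x_{m_i})`, integers
`M_1 < M_2 < ⋯` and `δ_1 > 0` such that for all finitely supported scalars `(a_i)`,
`‖∑ a_i x_{m_i}‖ ≤ sup_n δ_n ‖(a_i)‖_{ℓ₁(𝒢_n)}` with `𝒢_n = {G : |G| ≤ M_n}`. -/
theorem statement18 {X Y : Type*} [NormedAddCommGroup X] [NormedSpace ℝ X] [CompleteSpace X]
    [NormedAddCommGroup Y] [NormedSpace ℝ Y]
    (x : ℕ → X) (hxnorm : IsNormalizedSeq x) (hxwn : IsWeaklyNull x) (hxbasic : IsBasicSeq x)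
    (xt : ℕ → Y) (hsm : IsSpreadingModelOf x xt) (hne1 : ¬ EquivToLpBasis 1 xt)
    (δ : ℕ → ℝ) (hδ : ∀ n, 2 ≤ n → δ n ∈ Set.Ioo (0 : ℝ) 1) :
    ∃ φ : ℕ → ℕ, StrictMono φ ∧ ∃ M : ℕ → ℕ, StrictMono M ∧ ∃ δ₁ : ℝ, 0 < δ₁ ∧
      ∀ a : ℕ →₀ ℝ,
        ‖∑ i ∈ a.support, a i • x (φ i)‖ ≤
          sSup {r | ∃ n : ℕ, 1 ≤ n ∧
            r = (if n = 1 then δ₁ else δ n) * ell1G (M n) a} :=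
  statement18_general x hxnorm hxwn xt hsm hne1 δ hδ

end
end
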